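/- arXiv:0804.3029 — 6 statements merged into one kernel-verified Lean document; each statement's English description precedes it below -/
import Mathlib

section
/- If n ≥ 2 and r ≥ ⌊n/2⌋, then there does not exist an (r,≤2)-identifying code in 𝔽ⁿ. -/
open Finset

/-- The Hamming ball of radius `r` around `x` in `𝔽ⁿ = {0,1}ⁿ`. -/
def ballH (n r : ℕ) (x : Fin n → Bool) : Finset (Fin n → Bool) :=
  Finset.univ.filter (fun y => hammingDist x y ≤ r)

/-- `C` is an `(r, ≤ ℓ)`-identifying code in `𝔽ⁿ`. -/
def IdCode (n r ℓ : ℕ) (C : Finset (Fin n → Bool)) : Prop :=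
  C.Nonempty ∧ ∀ X Y : Finset (Fin n → Bool),
    X.card ≤ ℓ → Y.card ≤ ℓ → X ≠ Y →
      (X.biUnion (ballH n r)) ∩ C ≠ (Y.biUnion (ballH n r)) ∩ C

/-- The smallest cardinality of an `(r, ≤ ℓ)`-identifying code in `𝔽ⁿ`. -/
noncomputable def Mid (n r ℓ : ℕ) : ℕ :=
  sInf {k | ∃ C : Finset (Fin n → Bool), IdCode n r ℓ C ∧ C.card = k}

/-- binary entropy -/
noncomputable def binH (x : ℝ) : ℝ :=
  -(x * Real.logb 2 x) - (1 - x) * Real.logb 2 (1 - x)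

/-- m_n(r,ℓ) -/
noncomputable def mlow (n r ℓ : ℕ) : ℕ :=
  sInf {k | ∃ X Y : Finset (Fin n → Bool), X ≠ Y ∧ 1 ≤ X.card ∧ X.card ≤ ℓ ∧
    1 ≤ Y.card ∧ Y.card ≤ ℓ ∧
    (symmDiff (X.biUnion (ballH n r)) (Y.biUnion (ballH n r))).card = k}

/-- N_ℓ : the number of unordered pairs {X, Y} of distinct subsets with 1 ≤ card ≤ ℓ. -/
def Npairs (n ℓ : ℕ) : ℕ :=
  (((Finset.univ : Finset (Finset (Fin n → Bool))).filter
      (fun X => 1 ≤ X.card ∧ X.card ≤ ℓ)).powersetCard 2).card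

/-!
For `n ≤ 2r + 1` every word lies within distance `r` of `x` or of its complement, since the two
distances add up to `n`. Hence all antipodal pairs `{x, x̄}` have the whole space as their
`r`-neighbourhood, and for `n ≥ 2` there are two distinct such pairs, which no code can separate.
-/

lemma hammingDist_add_hammingDist_not {ι : Type*} [Fintype ι] (x y : ι → Bool) :
    hammingDist x y + hammingDist (fun i => !x i) y = Fintype.card ι := by
  classical
  have hnot : hammingDist (fun i => !x i) y = #{i | ¬ x i ≠ y i} := by
    unfold hammingDist
    congr 1
    ext i
    cases x i <;> cases y i <;> simp
  rw [hnot]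
  exact card_filter_add_card_filter_not _

lemma biUnion_ballH_pair_not_eq_univ {n r : ℕ} (hr : n ≤ 2 * r + 1) (x : Fin n → Bool) :
    ({x, fun i => !x i} : Finset (Fin n → Bool)).biUnion (ballH n r) = univ := by
  refine eq_univ_of_forall fun y => ?_
  have hsum := hammingDist_add_hammingDist_not x y
  simp only [Fintype.card_fin] at hsum
  simp only [ballH, mem_biUnion, mem_insert, mem_singleton, exists_eq_or_imp, exists_eq_left,
    mem_filter, mem_univ, true_and]
  omega

lemma pair_not_ne_pair_not {ι : Type*} [DecidableEq (ι → Bool)] {x y : ι → Bool} (hyx : y ≠ x)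
    (hyx' : y ≠ fun i => !x i) :
    ({x, fun i => !x i} : Finset (ι → Bool)) ≠ {y, fun i => !y i} := by
  intro h
  have hy : y ∈ ({x, fun i => !x i} : Finset (ι → Bool)) := h ▸ mem_insert_self _ _
  simp only [mem_insert, mem_singleton] at hy
  tauto

lemma not_idCode_of_biUnion_ballH_eq {n r ℓ : ℕ} {C X Y : Finset (Fin n → Bool)}
    (hX : #X ≤ ℓ) (hY : #Y ≤ ℓ) (hXY : X ≠ Y)
    (h : X.biUnion (ballH n r) = Y.biUnion (ballH n r)) : ¬ IdCode n r ℓ C :=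
  fun hC => hC.2 X Y hX hY hXY (by rw [h])

/-- If `n ≥ 2` and `r ≥ ⌊n/2⌋`, there is no `(r,≤2)`-identifying code in `𝔽ⁿ`. -/
theorem no_identifying_code_of_large_radius (n r : ℕ) (hn : 2 ≤ n) (hr : n / 2 ≤ r) :
    ¬ ∃ C : Finset (Fin n → Bool), IdCode n r 2 C := by
  rintro ⟨C, hC⟩
  have hr' : n ≤ 2 * r + 1 := by omega
  let i₀ : Fin n := ⟨0, by omega⟩
  let i₁ : Fin n := ⟨1, by omega⟩
  let x : Fin n → Bool := fun _ => false
  let y : Fin n → Bool := fun i => decide (i = i₀)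
  have hyx : y ≠ x := fun h => by simpa [x, y] using congrFun h i₀
  have hyx' : y ≠ fun i => !x i := fun h => by
    simpa [x, y, i₀, i₁, Fin.ext_iff] using congrFun h i₁
  refine not_idCode_of_biUnion_ballH_eq card_le_two card_le_two (pair_not_ne_pair_not hyx hyx')
    ?_ hC
  rw [biUnion_ballH_pair_not_eq_univ hr', biUnion_ballH_pair_not_eq_univ hr']
end

section
/- Let ℓ ≥ 1 be a fixed integer and let L be a fixed integer with L ≥ 2^ℓ. Then there exist n₀ and a constant A such that for every n ≥ n₀, with r = ⌊n/2⌋ − L, there exists an (r,≤ℓ)-identifying code in 𝔽ⁿ of size at most A·n^{2^{ℓ−1}+1}; that is, M_r^{(≤ℓ)}(n) ≤ A·n^{2^{ℓ−1}+1}. -/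
open Finset

/-!
Fix `X ≠ Y` with `|X|, |Y| ≤ ℓ` and `x ∈ X \ Y`, and group the coordinates into at most `2 ^ ℓ`
atoms according to which points of `Y` differ from `x` there. Flipping `x` on a set `T` of size
`r = ⌊n/2⌋ - L` that takes strictly less than half of every nonempty atom gives a point at
distance `r` from `x` and at distance more than `r` from every `y ∈ Y`; the slack `L ≥ 2 ^ ℓ` lets
every atom receive within `L + 1` of half its size. Since `C(m, m/2 - O(1)) ≥ 2 ^ m / O(√m)`,
there are at least `2 ^ n / (K n ^ (2 ^ (ℓ-1)))` such points, with `K` depending on `L` and `ℓ`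
only. So each `B_r(X) ∆ B_r(Y)` has density at least `1 / (K n ^ (2 ^ (ℓ-1)))`, and a greedy
transversal of these `2 ^ O(ℓ n)` sets is an identifying code of size `O(n ^ (2 ^ (ℓ-1) + 1))`.
-/

theorem sixteen_pow_le_mul_centralBinom_sq (k : ℕ) :
    16 ^ k ≤ (4 * k + 1) * k.centralBinom ^ 2 := by
  induction k with
  | zero => simp
  | succ k ih =>
    have hrec := Nat.succ_mul_centralBinom_succ k
    have hpoly : 4 * (k + 1) ^ 2 * (4 * k + 1) ≤ (4 * k + 5) * (2 * k + 1) ^ 2 := by nlinarith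
    have key : (k + 1) ^ 2 * 16 ^ (k + 1) ≤
        (k + 1) ^ 2 * ((4 * (k + 1) + 1) * (k + 1).centralBinom ^ 2) := by
      calc (k + 1) ^ 2 * 16 ^ (k + 1) = 16 * (k + 1) ^ 2 * 16 ^ k := by ring
        _ ≤ 16 * (k + 1) ^ 2 * ((4 * k + 1) * k.centralBinom ^ 2) := by gcongr
        _ = 4 * (4 * (k + 1) ^ 2 * (4 * k + 1)) * k.centralBinom ^ 2 := by ring
        _ ≤ 4 * ((4 * k + 5) * (2 * k + 1) ^ 2) * k.centralBinom ^ 2 :=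
            Nat.mul_le_mul_right _ (Nat.mul_le_mul_left 4 hpoly)
        _ = (k + 1) ^ 2 * ((4 * (k + 1) + 1) * (k + 1).centralBinom ^ 2) := by
            rw [show (k + 1) ^ 2 * ((4 * (k + 1) + 1) * (k + 1).centralBinom ^ 2) =
              (4 * k + 5) * ((k + 1) * (k + 1).centralBinom) ^ 2 by ring, hrec]; ring
    exact Nat.le_of_mul_le_mul_left key (by positivity)

theorem four_pow_le_mul_choose_half_sq (m : ℕ) :
    4 ^ m ≤ 4 * (m + 1) * m.choose (m / 2) ^ 2 := by
  obtain ⟨k, rfl | rfl⟩ := Nat.even_or_odd' m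
  · have h := sixteen_pow_le_mul_centralBinom_sq k
    rw [show 2 * k / 2 = k by omega, ← Nat.centralBinom_eq_two_mul_choose, pow_mul]
    calc (4 ^ 2) ^ k ≤ (4 * k + 1) * k.centralBinom ^ 2 := h
      _ ≤ 4 * (2 * k + 1) * k.centralBinom ^ 2 := by gcongr; omega
  · have h := sixteen_pow_le_mul_centralBinom_sq (k + 1)
    have hsplit : (k + 1).centralBinom = 2 * (2 * k + 1).choose k := by
      rw [Nat.centralBinom_eq_two_mul_choose, show 2 * (k + 1) = 2 * k + 1 + 1 by ring,
        Nat.choose_succ_succ, Nat.choose_symm_half]; ring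
    rw [hsplit, mul_pow, pow_succ] at h
    rw [show (2 * k + 1) / 2 = k by omega, pow_succ, pow_mul]
    norm_num at h ⊢
    generalize (2 * k + 1).choose k ^ 2 = C at h ⊢
    nlinarith [h]

theorem choose_half_le_four_pow_mul_choose (m d : ℕ) (h : 8 * d ≤ m) :
    m.choose (m / 2) ≤ 4 ^ d * m.choose (m / 2 - d) := by
  induction d with
  | zero => simp
  | succ d ih =>
    set j := m / 2 - (d + 1)
    have hj : m / 2 - d = j + 1 := by omega
    have hrec := Nat.choose_succ_right_eq m j
    have hstep : m.choose (j + 1) ≤ 4 * m.choose j := by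
      have : m - j ≤ 4 * (j + 1) := by omega
      nlinarith
    calc m.choose (m / 2) ≤ 4 ^ d * m.choose (j + 1) := hj ▸ ih (by omega)
      _ ≤ 4 ^ (d + 1) * m.choose j := by rw [pow_succ, mul_assoc]; gcongr

-- `C(m, c) ≥ 2 ^ m / O(√m)` for `c` within `B` below `m / 2`, squared to stay in `ℕ`.
theorem four_pow_le_mul_choose_sq {m c B : ℕ} (hc : c ≤ m / 2) (hB : m / 2 ≤ c + B) :
    4 ^ m ≤ 4 ^ (8 * B + 1) * (m + 1) * m.choose c ^ 2 := by
  by_cases hm : 8 * (m / 2 - c) ≤ m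
  · have h1 := four_pow_le_mul_choose_half_sq m
    have h2 := choose_half_le_four_pow_mul_choose m (m / 2 - c) hm
    rw [show m / 2 - (m / 2 - c) = c by omega] at h2
    have h3 : 16 ^ (m / 2 - c) ≤ 4 ^ (8 * B) := by
      rw [show (16 : ℕ) = 4 ^ 2 by norm_num, ← pow_mul]
      exact Nat.pow_le_pow_right (by norm_num) (by omega)
    calc 4 ^ m ≤ 4 * (m + 1) * (4 ^ (m / 2 - c) * m.choose c) ^ 2 := h1.trans (by gcongr)
      _ = 16 ^ (m / 2 - c) * (4 * (m + 1) * m.choose c ^ 2) := by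
          rw [show (16 : ℕ) = 4 ^ 2 by norm_num, ← pow_mul]; ring
      _ ≤ 4 ^ (8 * B) * (4 * (m + 1) * m.choose c ^ 2) := Nat.mul_le_mul_right _ h3
      _ = 4 ^ (8 * B + 1) * (m + 1) * m.choose c ^ 2 := by ring
  · calc 4 ^ m ≤ 4 ^ (8 * B + 1) := Nat.pow_le_pow_right (by norm_num) (by omega)
      _ ≤ 4 ^ (8 * B + 1) * (m + 1) * m.choose c ^ 2 := by
          rw [mul_assoc]
          exact Nat.le_mul_of_pos_right _ (Nat.mul_pos (Nat.succ_pos m)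
            (pow_pos (Nat.choose_pos (by omega)) 2))

theorem exists_near_half_sizes {K : Type*} [Fintype K] (m : K → ℕ) {L : ℕ}
    (hK : Fintype.card K ≤ L) (hbig : Fintype.card K * L < (∑ k, m k) / 2) :
    ∃ c : K → ℕ, ∑ k, c k + L = (∑ k, m k) / 2 ∧
      ∀ k, c k ≤ m k / 2 ∧ m k / 2 ≤ c k + (L + 1) ∧ (0 < m k → 2 * c k < m k) := by
  classical
  obtain ⟨c₀, hc₀⟩ : ∃ c₀ : K → ℕ, ∀ k,
      2 * c₀ k ≤ m k ∧ m k ≤ 2 * c₀ k + 2 ∧ (0 < m k → 2 * c₀ k < m k) :=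
    ⟨fun k => (m k - 1) / 2, fun k => by dsimp only; omega⟩
  have hS_le : 2 * ∑ k, c₀ k ≤ ∑ k, m k := by
    rw [mul_sum]; exact sum_le_sum fun k _ => (hc₀ k).1
  have hS_ge : ∑ k, m k ≤ 2 * ∑ k, c₀ k + 2 * Fintype.card K := by
    calc ∑ k, m k ≤ ∑ k, (2 * c₀ k + 2) := sum_le_sum fun k _ => (hc₀ k).2.1
      _ = 2 * ∑ k, c₀ k + 2 * Fintype.card K := by
          rw [sum_add_distrib, ← mul_sum, sum_const, card_univ, smul_eq_mul]; ring
  -- one atom with `c₀ ≥ L` absorbs the whole surplus `d ≤ L`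
  obtain ⟨k₀, hk₀⟩ : ∃ k₀, L ≤ c₀ k₀ := by
    by_contra! h
    have : ∑ k, (c₀ k + 1) ≤ ∑ _k : K, L := sum_le_sum fun k _ => h k
    rw [sum_add_distrib, sum_const, sum_const, card_univ, smul_eq_mul, smul_eq_mul,
      mul_one] at this
    omega
  have hk₀S : c₀ k₀ ≤ ∑ k, c₀ k := single_le_sum (fun k _ => Nat.zero_le _) (mem_univ k₀)
  obtain ⟨d, hd⟩ : ∃ d, d = ∑ k, c₀ k + L - (∑ k, m k) / 2 := ⟨_, rfl⟩
  refine ⟨fun k => c₀ k - if k = k₀ then d else 0, ?_, fun k => ?_⟩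
  · rw [sum_tsub_distrib]
    · rw [sum_ite_eq' univ k₀, if_pos (mem_univ _)]; omega
    · intro k _; split_ifs with h
      · subst h; omega
      · exact Nat.zero_le _
  · dsimp only
    have := hc₀ k
    split_ifs with h
    · subst h; omega
    · omega

theorem prod_choose_le_card_filter_card_fiber_eq {α K : Type*} [Fintype α] [DecidableEq α]
    [Fintype K] [DecidableEq K] (f : α → K) (c : K → ℕ) :
    ∏ k, (#{i | f i = k}).choose (c k) ≤ #{T : Finset α | ∀ k, #{i ∈ T | f i = k} = c k} := by
  set P := Fintype.piFinset fun k => powersetCard (c k) {i | f i = k}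
  have hfiber : ∀ g ∈ P, ∀ k, {i ∈ univ.biUnion g | f i = k} = g k := by
    intro g hg k
    simp only [P, Fintype.mem_piFinset, mem_powersetCard, subset_iff, mem_filter, mem_univ,
      true_and] at hg
    ext i
    simp only [mem_filter, mem_biUnion, mem_univ, true_and]
    constructor
    · rintro ⟨⟨k', hi⟩, rfl⟩
      rwa [(hg k').1 hi]
    · exact fun hi => ⟨⟨k, hi⟩, (hg k).1 hi⟩
  calc ∏ k, (#{i | f i = k}).choose (c k) = #P := by simp [P, card_powersetCard]
    _ ≤ _ := by
      refine card_le_card_of_injOn (fun g => univ.biUnion g) (fun g hg => ?_) ?_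
      · rw [mem_coe] at hg
        simp only [coe_filter, mem_univ, true_and]
        intro k
        rw [hfiber g hg]
        simp only [P, Fintype.mem_piFinset, mem_powersetCard] at hg
        exact (hg k).2
      · intro g₁ hg₁ g₂ hg₂ h
        funext k
        rw [← hfiber g₁ hg₁, ← hfiber g₂ hg₂]
        simp only [h]

theorem two_mul_card_filter_mem_lt {α K : Type*} [Fintype α] [DecidableEq K] (f : α → K)
    (T : Finset α) (s : Finset K)
    (hT : ∀ k, 0 < #{i | f i = k} → 2 * #{i ∈ T | f i = k} < #{i | f i = k})
    (hs : ∃ i, f i ∈ s) : 2 * #{i ∈ T | f i ∈ s} < #{i | f i ∈ s} := by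
  obtain ⟨i, hi⟩ := hs
  rw [← sum_card_fiberwise_eq_card_filter, ← sum_card_fiberwise_eq_card_filter, mul_sum]
  refine sum_lt_sum (fun k _ => ?_) ⟨f i, hi, hT _ (card_pos.2 ⟨i, by simp⟩)⟩
  rcases Nat.eq_zero_or_pos #{i | f i = k} with h | h
  · have : #{i ∈ T | f i = k} ≤ #{i | f i = k} :=
      card_le_card (filter_subset_filter _ (subset_univ T))
    omega
  · exact (hT k h).le

section Flip

variable {ι : Type*} [DecidableEq ι]

def flipOn (x : ι → Bool) (T : Finset ι) : ι → Bool := fun i => xor (x i) (decide (i ∈ T))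

theorem hammingDist_flipOn_add [Fintype ι] (x y : ι → Bool) (T : Finset ι) :
    hammingDist y (flipOn x T) + 2 * #{i ∈ T | x i ≠ y i} = hammingDist x y + #T := by
  rw [← filter_univ_mem T, filter_filter]
  simp only [hammingDist, card_filter, mul_sum, ← sum_add_distrib]
  refine sum_congr rfl fun i _ => ?_
  by_cases h : i ∈ T <;> cases hx : x i <;> cases hy : y i <;> simp [flipOn, h, hx]

theorem hammingDist_flipOn_self [Fintype ι] (x : ι → Bool) (T : Finset ι) :
    hammingDist x (flipOn x T) = #T := by
  simpa using hammingDist_flipOn_add x x T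

theorem flipOn_injective (x : ι → Bool) : Function.Injective (flipOn x) := by
  intro T₁ T₂ h
  ext i
  simpa [flipOn] using congrFun h i

end Flip

theorem four_pow_sum_le_prod_choose {K : Type*} [Fintype K] (m c : K → ℕ) (B : ℕ)
    (hc : ∀ k, c k ≤ m k / 2 ∧ m k / 2 ≤ c k + B) :
    4 ^ (∑ k, m k) ≤
      (4 ^ (8 * B + 1) * (∑ k, m k + 1)) ^ Fintype.card K * (∏ k, (m k).choose (c k)) ^ 2 := by
  calc 4 ^ (∑ k, m k) = ∏ k, 4 ^ m k := (prod_pow_eq_pow_sum ..).symm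
    _ ≤ ∏ k, (4 ^ (8 * B + 1) * (∑ k, m k + 1) * (m k).choose (c k) ^ 2) := by
        refine prod_le_prod (fun _ _ => Nat.zero_le _) fun k _ => ?_
        refine (four_pow_le_mul_choose_sq (hc k).1 (hc k).2).trans ?_
        gcongr
        exact single_le_sum (fun k _ => Nat.zero_le (m k)) (mem_univ k)
    _ = _ := by rw [prod_mul_distrib, prod_const, card_univ, prod_pow]

theorem four_pow_le_card_ball_sdiff_sq {n L : ℕ} (x : Fin n → Bool) (Y : Finset (Fin n → Bool))
    (hx : x ∉ Y) (hL : 2 ^ #Y ≤ L) (hn : 2 ^ #Y * L < n / 2) :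
    4 ^ n ≤ (4 ^ (8 * L + 9) * (n + 1)) ^ 2 ^ #Y *
      #(ballH n (n / 2 - L) x \ Y.biUnion (ballH n (n / 2 - L))) ^ 2 := by
  classical
  -- coordinates are grouped into atoms according to which points of `Y` differ from `x` there
  set p : Fin n → (Y → Bool) := fun i y => decide (x i ≠ y.1 i)
  set m : (Y → Bool) → ℕ := fun k => #{i | p i = k}
  have hm : ∑ k, m k = n := by simp [m, sum_card_fiberwise_eq_card_filter]
  have hK : Fintype.card (Y → Bool) = 2 ^ #Y := by simp
  obtain ⟨c, hcsum, hc⟩ := exists_near_half_sizes m (L := L) (by rwa [hK]) (by rwa [hK, hm])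
  rw [hm] at hcsum
  have hmaps : ∀ T : Finset (Fin n), (∀ k, #{i ∈ T | p i = k} = c k) →
      flipOn x T ∈ ballH n (n / 2 - L) x \ Y.biUnion (ballH n (n / 2 - L)) := by
    intro T hT
    have hTcard : #T = n / 2 - L := by
      rw [← filter_true_of_mem (s := T) (p := fun i => p i ∈ univ) (fun i _ => mem_univ _),
        ← sum_card_fiberwise_eq_card_filter, sum_congr rfl fun k _ => hT k]
      exact Nat.eq_sub_of_add_eq hcsum
    simp only [mem_sdiff, ballH, mem_biUnion, mem_filter, mem_univ, true_and, not_exists,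
      not_and, not_le, hammingDist_flipOn_self, hTcard, le_refl]
    intro y hy
    have hlt : 2 * #{i ∈ T | x i ≠ y i} < hammingDist x y := by
      have := two_mul_card_filter_mem_lt p T {k | k ⟨y, hy⟩ = true}
        (fun k hk => hT k ▸ (hc k).2.2 hk) ?_
      · simpa [p, hammingDist] using this
      · obtain ⟨i, hi⟩ := Function.ne_iff.1 (show x ≠ y by rintro rfl; exact hx hy)
        exact ⟨i, by simpa [p] using hi⟩
    have := hammingDist_flipOn_add x y T
    omega
  have hcount : ∏ k, (m k).choose (c k) ≤
      #(ballH n (n / 2 - L) x \ Y.biUnion (ballH n (n / 2 - L))) :=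
    (prod_choose_le_card_filter_card_fiber_eq p c).trans
      (card_le_card_of_injOn _ (fun T hT => hmaps T (by simpa using hT))
        (flipOn_injective x).injOn)
  have hprod := four_pow_sum_le_prod_choose m c (L + 1) fun k => ⟨(hc k).1, (hc k).2.1⟩
  rw [hm, hK, show 8 * (L + 1) + 1 = 8 * L + 9 by ring] at hprod
  exact hprod.trans (by gcongr)

theorem pow_le_mul_card_symmDiff_biUnion_ballH {n ℓ L : ℕ} (hℓ : 1 ≤ ℓ) (hL : 2 ^ ℓ ≤ L)
    (hn : 2 ^ ℓ * L < n / 2) {X Y : Finset (Fin n → Bool)} (hX : #X ≤ ℓ) (hY : #Y ≤ ℓ)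
    (hXY : X ≠ Y) :
    2 ^ n ≤ (4 ^ (8 * L + 9) * (n + 1)) ^ 2 ^ (ℓ - 1) *
      #(symmDiff (X.biUnion (ballH n (n / 2 - L))) (Y.biUnion (ballH n (n / 2 - L)))) := by
  wlog hxy : ∃ x ∈ X, x ∉ Y generalizing X Y
  · rw [symmDiff_comm]
    refine this hY hX hXY.symm ?_
    by_contra! hYX
    exact hXY (Subset.antisymm (fun x hx => by_contra fun h => hxy ⟨x, hx, h⟩) hYX)
  obtain ⟨x, hxX, hxY⟩ := hxy
  have hYℓ : 2 ^ #Y ≤ 2 ^ ℓ := Nat.pow_le_pow_right two_pos hY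
  have key := four_pow_le_card_ball_sdiff_sq x Y hxY (hYℓ.trans hL)
    ((Nat.mul_le_mul_right L hYℓ).trans_lt hn)
  have hsub : ballH n (n / 2 - L) x \ Y.biUnion (ballH n (n / 2 - L)) ⊆
      symmDiff (X.biUnion (ballH n (n / 2 - L))) (Y.biUnion (ballH n (n / 2 - L))) :=
    fun z hz => mem_symmDiff.2 (Or.inl ⟨mem_biUnion.2 ⟨x, hxX, (mem_sdiff.1 hz).1⟩,
      (mem_sdiff.1 hz).2⟩)
  rw [← Nat.pow_le_pow_iff_left two_ne_zero]
  calc (2 ^ n) ^ 2 = 4 ^ n := by rw [← pow_mul, mul_comm, pow_mul]; norm_num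
    _ ≤ _ := key
    _ ≤ (4 ^ (8 * L + 9) * (n + 1)) ^ 2 ^ ℓ * #(symmDiff (X.biUnion (ballH n (n / 2 - L)))
          (Y.biUnion (ballH n (n / 2 - L)))) ^ 2 := by
        gcongr
        exact Nat.one_le_iff_ne_zero.2 (by positivity)
    _ = _ := by
        rw [show 2 ^ ℓ = 2 ^ (ℓ - 1) * 2 by rw [← pow_succ, Nat.sub_add_cancel hℓ], pow_mul]
        ring

section Transversal

variable {α : Type*} [Fintype α] [DecidableEq α]

theorem exists_le_mul_card_filter_mem [Nonempty α] (B : Finset (Finset α)) (D : ℕ)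
    (hB : ∀ t ∈ B, Fintype.card α ≤ D * #t) : ∃ a, #B ≤ D * #{t ∈ B | a ∈ t} := by
  obtain ⟨a, -, ha⟩ := exists_max_image univ (fun a => #{t ∈ B | a ∈ t}) univ_nonempty
  refine ⟨a, Nat.le_of_mul_le_mul_left ?_ (Fintype.card_pos (α := α))⟩
  calc Fintype.card α * #B = ∑ _t ∈ B, Fintype.card α := by
        rw [sum_const, smul_eq_mul, mul_comm]
    _ ≤ ∑ t ∈ B, D * #t := sum_le_sum hB
    _ = D * ∑ t ∈ B, #t := (mul_sum ..).symm
    _ ≤ D * (Fintype.card α * #{t ∈ B | a ∈ t}) :=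
        Nat.mul_le_mul_left _ (sum_card_le fun b => ha b (mem_univ b))
    _ = Fintype.card α * (D * #{t ∈ B | a ∈ t}) := by ring

-- Greedy: each new point meets at least a `1 / D` fraction of the sets still missed.
theorem exists_card_le_pow_mul_card_filter_disjoint_le [Nonempty α] (B : Finset (Finset α))
    (D : ℕ) (hB : ∀ t ∈ B, Fintype.card α ≤ D * #t) (k : ℕ) :
    ∃ C : Finset α, #C ≤ k ∧ D ^ k * #{t ∈ B | Disjoint t C} ≤ (D - 1) ^ k * #B := by
  induction k with
  | zero => exact ⟨∅, by simp, by simp⟩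
  | succ k ih =>
    obtain ⟨C, hCk, hC⟩ := ih
    set B' := {t ∈ B | Disjoint t C}
    obtain ⟨a, ha⟩ := exists_le_mul_card_filter_mem B' D fun t ht => hB t (mem_filter.1 ht).1
    have hsplit := card_filter_add_card_filter_not (s := B') (fun t => a ∈ t)
    have hnew : {t ∈ B | Disjoint t (insert a C)} = {t ∈ B' | a ∉ t} := by
      ext t; simp only [B', mem_filter, disjoint_insert_right]; tauto
    refine ⟨insert a C, (card_insert_le a C).trans (by omega), ?_⟩
    have hstep : D * #{t ∈ B' | a ∉ t} ≤ (D - 1) * #B' := by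
      rw [Nat.sub_mul, one_mul, ← hsplit, mul_add]; omega
    calc D ^ (k + 1) * #{t ∈ B | Disjoint t (insert a C)}
        = D ^ k * (D * #{t ∈ B' | a ∉ t}) := by rw [hnew, pow_succ]; ring
      _ ≤ D ^ k * ((D - 1) * #B') := Nat.mul_le_mul_left _ hstep
      _ = (D - 1) * (D ^ k * #B') := by ring
      _ ≤ (D - 1) * ((D - 1) ^ k * #B) := Nat.mul_le_mul_left _ hC
      _ = (D - 1) ^ (k + 1) * #B := by ring

theorem pow_add_mul_pow_le_add_one_pow (a k : ℕ) :
    a ^ (k + 1) + (k + 1) * a ^ k ≤ (a + 1) ^ (k + 1) := by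
  induction k with
  | zero => simp
  | succ k ih =>
    calc a ^ (k + 2) + (k + 2) * a ^ (k + 1)
        ≤ (a + 1) * (a ^ (k + 1) + (k + 1) * a ^ k) := by
          ring_nf; nlinarith [Nat.zero_le (a ^ k)]
      _ ≤ (a + 1) * (a + 1) ^ (k + 1) := Nat.mul_le_mul_left _ ih
      _ = (a + 1) ^ (k + 2) := by ring

theorem two_mul_pred_pow_self_le {D : ℕ} (hD : 0 < D) : 2 * (D - 1) ^ D ≤ D ^ D := by
  obtain ⟨a, rfl⟩ := Nat.exists_eq_add_one.2 hD
  have := pow_add_mul_pow_le_add_one_pow a a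
  have h : a ^ (a + 1) ≤ (a + 1) * a ^ a := by
    rw [pow_succ, mul_comm]; exact Nat.mul_le_mul_right _ (Nat.le_succ a)
  rw [Nat.add_sub_cancel]
  omega

theorem exists_card_le_forall_inter_nonempty [Nonempty α] (B : Finset (Finset α)) (D s : ℕ)
    (hB : ∀ t ∈ B, Fintype.card α ≤ D * #t) (hs : #B < 2 ^ s) :
    ∃ C : Finset α, #C ≤ D * s ∧ ∀ t ∈ B, (t ∩ C).Nonempty := by
  obtain ⟨C, hCcard, hC⟩ := exists_card_le_pow_mul_card_filter_disjoint_le B D hB (D * s)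
  refine ⟨C, hCcard, fun t ht => ?_⟩
  have hD : 0 < D := by
    have h1 := hB t ht; have h2 := Fintype.card_pos (α := α)
    exact Nat.pos_of_ne_zero (by rintro rfl; omega)
  suffices #{t ∈ B | Disjoint t C} = 0 by
    rw [card_eq_zero, filter_eq_empty_iff] at this
    exact not_disjoint_iff_nonempty_inter.1 (this ht)
  have hbase : (D - 1) ^ (D * s) * 2 ^ s ≤ D ^ (D * s) := by
    rw [pow_mul, pow_mul, ← mul_pow]
    exact Nat.pow_le_pow_left (by linarith [two_mul_pred_pow_self_le hD]) s
  by_contra hne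
  have h1 : D ^ (D * s) ≤ (D - 1) ^ (D * s) * #B :=
    (Nat.le_mul_of_pos_right _ (Nat.pos_of_ne_zero hne)).trans hC
  have h2 : D ^ (D * s) * 2 ^ s ≤ D ^ (D * s) * #B :=
    calc D ^ (D * s) * 2 ^ s ≤ (D - 1) ^ (D * s) * #B * 2 ^ s := Nat.mul_le_mul_right _ h1
      _ = (D - 1) ^ (D * s) * 2 ^ s * #B := by ring
      _ ≤ D ^ (D * s) * #B := Nat.mul_le_mul_right _ hbase
  exact absurd h2 (not_le.2 ((Nat.mul_lt_mul_left (by positivity)).2 hs))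

end Transversal

theorem card_filter_card_le_le {α : Type*} [Fintype α] [DecidableEq α] (ℓ : ℕ) :
    #{s : Finset α | #s ≤ ℓ} ≤ (Fintype.card α + 1) ^ ℓ := by
  induction ℓ with
  | zero =>
    rw [pow_zero, card_le_one]
    simp
  | succ ℓ ih =>
    have hsub : ({s | #s ≤ ℓ + 1} : Finset (Finset α)) ⊆
        ({s | #s ≤ ℓ} : Finset (Finset α)) ∪
          (univ ×ˢ ({s | #s ≤ ℓ} : Finset (Finset α))).image fun p => insert p.1 p.2 := by
      intro s hs
      simp only [mem_filter, mem_univ, true_and] at hs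
      by_cases h : #s ≤ ℓ
      · exact mem_union_left _ (by simpa using h)
      · obtain ⟨a, ha⟩ := card_pos.1 (by omega : 0 < #s)
        refine mem_union_right _ (mem_image.2 ⟨(a, s.erase a), ?_, insert_erase ha⟩)
        simp [card_erase_of_mem ha]
        omega
    calc _ ≤ _ := card_le_card hsub
      _ ≤ _ := card_union_le _ _
      _ ≤ (Fintype.card α + 1) ^ ℓ + Fintype.card α * (Fintype.card α + 1) ^ ℓ := by
          exact Nat.add_le_add ih (card_image_le.trans (by rw [card_product, card_univ]; gcongr))
      _ = (Fintype.card α + 1) ^ (ℓ + 1) := by ring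

theorem exists_idCode_card_le {n ℓ L : ℕ} (hℓ : 1 ≤ ℓ) (hL : 2 ^ ℓ ≤ L)
    (hn : 2 ^ ℓ * L < n / 2) :
    ∃ C, IdCode n (n / 2 - L) ℓ C ∧
      #C ≤ (4 ^ (8 * L + 9) * (n + 1)) ^ 2 ^ (ℓ - 1) * (2 * ℓ * (n + 1) + 1) := by
  classical
  set small : Finset (Finset (Fin n → Bool)) := {X | #X ≤ ℓ}
  set pairs := (small ×ˢ small).filter fun p => p.1 ≠ p.2
  set B := pairs.image fun p =>
    symmDiff (p.1.biUnion (ballH n (n / 2 - L))) (p.2.biUnion (ballH n (n / 2 - L)))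
  have hB : ∀ t ∈ B, Fintype.card (Fin n → Bool) ≤
      (4 ^ (8 * L + 9) * (n + 1)) ^ 2 ^ (ℓ - 1) * #t := by
    simp only [B, pairs, small, mem_image, mem_filter, mem_product, mem_univ, true_and]
    rintro t ⟨⟨X, Y⟩, ⟨⟨hX, hY⟩, hXY⟩, rfl⟩
    simpa using pow_le_mul_card_symmDiff_biUnion_ballH hℓ hL hn hX hY hXY
  have hBcard : #B < 2 ^ (2 * ℓ * (n + 1) + 1) := by
    calc #B ≤ #small * #small :=
          card_image_le.trans ((card_filter_le _ _).trans_eq (card_product ..))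
      _ ≤ (2 ^ n + 1) ^ ℓ * (2 ^ n + 1) ^ ℓ := by
          have := card_filter_card_le_le (α := Fin n → Bool) ℓ
          simp only [Fintype.card_fun, Fintype.card_bool, Fintype.card_fin] at this
          gcongr
      _ ≤ (2 ^ (n + 1)) ^ ℓ * (2 ^ (n + 1)) ^ ℓ := by
          have : 2 ^ n + 1 ≤ 2 ^ (n + 1) := by
            rw [pow_succ]; have := Nat.one_le_two_pow (n := n); omega
          gcongr
      _ = 2 ^ (2 * ℓ * (n + 1)) := by rw [← pow_mul, ← pow_add]; ring_nf
      _ < _ := Nat.pow_lt_pow_right one_lt_two (Nat.lt_succ_self _)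
  obtain ⟨C, hC, hhit⟩ := exists_card_le_forall_inter_nonempty B _ _ hB hBcard
  refine ⟨C, ⟨?_, fun X Y hX hY hXY heq => ?_⟩, hC⟩
  · obtain ⟨z, hz⟩ := hhit _ (mem_image_of_mem _ (show ({fun _ => false}, ∅) ∈ pairs by
      simp [pairs, small, hℓ]))
    exact ⟨z, (mem_inter.1 hz).2⟩
  · obtain ⟨z, hz⟩ := hhit _ (mem_image_of_mem _ (show (X, Y) ∈ pairs by
      simp [pairs, small, hX, hY, hXY]))
    rw [← inf_eq_inter, inf_symmDiff_distrib_right, inf_eq_inter, inf_eq_inter, heq,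
      symmDiff_self] at hz
    simp at hz

/-- For fixed `ℓ ≥ 1` and fixed `L ≥ 2^ℓ`, there are `n₀` and `A` such that
for all `n ≥ n₀`, with `r = ⌊n/2⌋ - L`, there exists an `(r,≤ℓ)`-identifying code of size
at most `A·n^{2^{ℓ-1}+1}`; in particular `M_r^{(≤ℓ)}(n) ≤ A·n^{2^{ℓ-1}+1}`. -/
theorem identifying_code_size_polynomial (ℓ L : ℕ) (hℓ : 1 ≤ ℓ) (hL : 2 ^ ℓ ≤ L) :
    ∃ (n₀ : ℕ) (A : ℝ), ∀ n : ℕ, n₀ ≤ n →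
      (∃ C : Finset (Fin n → Bool), IdCode n (n / 2 - L) ℓ C ∧
        (C.card : ℝ) ≤ A * (n : ℝ) ^ (2 ^ (ℓ - 1) + 1)) ∧
      (Mid n (n / 2 - L) ℓ : ℝ) ≤ A * (n : ℝ) ^ (2 ^ (ℓ - 1) + 1) := by
  refine ⟨2 * (2 ^ ℓ * L + 1), ((2 * 4 ^ (8 * L + 9)) ^ 2 ^ (ℓ - 1) * (4 * ℓ + 1) : ℕ),
    fun n hn => ?_⟩
  obtain ⟨C, hC, hcard⟩ := exists_idCode_card_le (n := n) hℓ hL (by omega)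
  have hCA : #C ≤ (2 * 4 ^ (8 * L + 9)) ^ 2 ^ (ℓ - 1) * (4 * ℓ + 1) * n ^ (2 ^ (ℓ - 1) + 1) :=
    calc #C ≤ (4 ^ (8 * L + 9) * (n + 1)) ^ 2 ^ (ℓ - 1) * (2 * ℓ * (n + 1) + 1) := hcard
      _ ≤ (2 * 4 ^ (8 * L + 9) * n) ^ 2 ^ (ℓ - 1) * ((4 * ℓ + 1) * n) := by
          have h2 : 2 ≤ n := by omega
          refine Nat.mul_le_mul (Nat.pow_le_pow_left ?_ _) (by nlinarith)
          rw [mul_comm 2, mul_assoc]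
          exact Nat.mul_le_mul_left _ (by omega)
      _ = _ := by ring
  have hCA' : (#C : ℝ) ≤ (((2 * 4 ^ (8 * L + 9)) ^ 2 ^ (ℓ - 1) * (4 * ℓ + 1) : ℕ) : ℝ) *
      (n : ℝ) ^ (2 ^ (ℓ - 1) + 1) := by exact_mod_cast hCA
  have hMid : Mid n (n / 2 - L) ℓ ≤ #C := Nat.sInf_le ⟨C, hC, rfl⟩
  exact ⟨⟨C, hC, hCA'⟩, (Nat.cast_le.2 hMid).trans hCA'⟩
end

section
/- Let ℓ ≥ 1 be a fixed integer. For every ε > 0 there exist a constant c > 0 and n₀ such that for every n ≥ n₀, every ℓ+1 words x, y₁, …, y_ℓ ∈ 𝔽ⁿ with yᵢ ≠ x for i = 1, …, ℓ, and every integer r with 0 ≤ r ≤ (1/2 − ε)·n, there exist at least c·binom(n,r) words z ∈ 𝔽ⁿ with d(z,x) = r and d(z,yᵢ) > r for all i = 1, …, ℓ. -/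
/-!
Flipping the coordinates in `F` turns `x` into a word `z` with `d(z, x) = #F`, and
`d(z, yᵢ) > #F` holds exactly when `F` contains less than half of `Dᵢ = {j | xⱼ ≠ yᵢⱼ}`.
The coordinates of the small `Dᵢ` (of size at most `T`) are avoided altogether, which costs
only a factor `2 ^ (ℓ T)` in `binom(n, r)`. For a large `Dᵢ`, Markov's inequality applied to
the `K`-th binomial moment of the hypergeometric variable `#(F ∩ Dᵢ)` shows that at most a
fraction `(1 - e) ^ K` of the `r`-sets contain half of `Dᵢ`, because `r / m ≤ 1/2 - e` for the
number `m` of remaining coordinates. Choosing `K` with `ℓ (1 - e) ^ K ≤ 1/2`, a union bound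
leaves half of the `r`-sets.
-/

open Finset

open scoped symmDiff

namespace Nat

theorem choose_succ_le_two_mul_choose {n r : ℕ} (h : 2 * r ≤ n) :
    (n + 1).choose r ≤ 2 * n.choose r := by
  rcases r with _ | r
  · simp
  · rw [choose_succ_succ, two_mul]
    exact Nat.add_le_add_right (choose_le_succ_of_lt_half_left (by omega)) _

theorem choose_add_le_two_pow_mul_choose {n r : ℕ} (h : 2 * r ≤ n) (q : ℕ) :
    (n + q).choose r ≤ 2 ^ q * n.choose r := by
  induction q with
  | zero => simp
  | succ q ih =>
    calc (n + (q + 1)).choose r ≤ 2 * (n + q).choose r :=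
          choose_succ_le_two_mul_choose (n := n + q) (by omega)
      _ ≤ 2 ^ (q + 1) * n.choose r := by
          rw [pow_succ', mul_assoc]
          exact Nat.mul_le_mul_left 2 ih

theorem choose_mul_choose_le_pow_mul {t u r m a : ℕ} {e : ℝ} (he : 0 ≤ e) (ht : t ≤ 2 * u)
    (hau : a ≤ u) (har : a ≤ r) (hae : (a : ℝ) ≤ 2 * e * u) (hr : (r : ℝ) ≤ (1 / 2 - e) * m) :
    (t.choose a * r.choose a : ℝ) ≤ (1 - e) ^ a * (u.choose a * m.choose a) := by
  have hrm : r ≤ m := by exact_mod_cast (by nlinarith [(m.cast_nonneg : (0 : ℝ) ≤ m)] : (r : ℝ) ≤ m)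
  have hfactor : ∀ j ∈ Finset.range a,
      ((t - j : ℕ) : ℝ) * ((r - j : ℕ) : ℝ)
        ≤ (1 - e) * (((u - j : ℕ) : ℝ) * ((m - j : ℕ) : ℝ)) := by
    intro j hj
    have hja : j < a := Finset.mem_range.1 hj
    have htj : ((t - j : ℕ) : ℝ) ≤ 2 * u - j := by
      calc ((t - j : ℕ) : ℝ) ≤ ((2 * u - j : ℕ) : ℝ) := by gcongr
        _ = 2 * u - j := by rw [Nat.cast_sub (by omega)]; push_cast; ring
    have hje : (j : ℝ) ≤ 2 * e * u := by linarith [(by exact_mod_cast hja.le : (j : ℝ) ≤ a)]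
    have hju : (j : ℝ) ≤ u := by exact_mod_cast (hja.le.trans hau)
    rw [Nat.cast_sub (by omega : j ≤ r), Nat.cast_sub (by omega : j ≤ u),
      Nat.cast_sub (by omega : j ≤ m)]
    have hrj : (r : ℝ) - j ≤ (1 / 2 - e) * (m - j) := by nlinarith [j.cast_nonneg (α := ℝ)]
    have hjr : (0 : ℝ) ≤ r - j := by
      linarith [(by exact_mod_cast (hja.le.trans har) : (j : ℝ) ≤ r)]
    -- `(2u - j)(1/2 - e) ≤ (1 - e)(u - j)` is equivalent to `j ≤ 2eu`
    calc ((t - j : ℕ) : ℝ) * (r - j) ≤ (2 * u - j) * ((1 / 2 - e) * (m - j)) := by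
          gcongr
          linarith
      _ ≤ (1 - e) * ((u - j) * (m - j)) := by
          have hmj : (0 : ℝ) ≤ m - j := by
            linarith [(by exact_mod_cast (hja.le.trans (har.trans hrm)) : (j : ℝ) ≤ m)]
          nlinarith [mul_le_mul_of_nonneg_right hje hmj]
  have hdesc : (t.descFactorial a * r.descFactorial a : ℝ)
      ≤ (1 - e) ^ a * (u.descFactorial a * m.descFactorial a) := by
    rw [show (1 - e) ^ a = ∏ _j ∈ Finset.range a, (1 - e) by simp]
    simp only [descFactorial_eq_prod_range, Nat.cast_prod, ← Finset.prod_mul_distrib]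
    exact Finset.prod_le_prod (fun j _ => by positivity) hfactor
  simp only [descFactorial_eq_factorial_mul_choose, Nat.cast_mul] at hdesc
  refine le_of_mul_le_mul_left (a := ((a ! : ℝ) * a !)) ?_ (by positivity)
  calc _ = (a ! * t.choose a * (a ! * r.choose a) : ℝ) := by ring
    _ ≤ _ := hdesc
    _ = _ := by ring

end Nat

namespace Finset

variable {α : Type*} [DecidableEq α]

theorem card_filter_powersetCard_superset {Ω U : Finset α} (hU : U ⊆ Ω) {r : ℕ} (hr : #U ≤ r) :
    #{F ∈ Ω.powersetCard r | U ⊆ F} = (#Ω - #U).choose (r - #U) := by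
  rw [← card_sdiff_of_subset hU, ← card_powersetCard]
  refine card_bij' (fun F _ => F \ U) (fun G _ => G ∪ U) ?_ ?_ ?_ ?_
  · intro F hF
    simp only [mem_filter, mem_powersetCard] at hF ⊢
    exact ⟨sdiff_subset_sdiff hF.1.1 le_rfl, by rw [card_sdiff_of_subset hF.2, hF.1.2]⟩
  · intro G hG
    simp only [mem_filter, mem_powersetCard] at hG ⊢
    have hGU : Disjoint G U := disjoint_of_subset_left hG.1 sdiff_disjoint
    exact ⟨⟨union_subset (hG.1.trans sdiff_subset) hU, by rw [card_union_of_disjoint hGU]; omega⟩,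
      subset_union_right⟩
  · intro F hF
    exact sdiff_union_of_subset (mem_filter.1 hF).2
  · intro G hG
    exact union_sdiff_cancel_right
      (disjoint_of_subset_left (mem_powersetCard.1 hG).1 sdiff_disjoint)

/-- Double counting the pairs `U ⊆ F` with `U` an `a`-subset of `A`. -/
theorem sum_choose_card_inter_powersetCard {Ω A : Finset α} (hA : A ⊆ Ω) {a r : ℕ} (har : a ≤ r) :
    ∑ F ∈ Ω.powersetCard r, (#(F ∩ A)).choose a = (#A).choose a * (#Ω - a).choose (r - a) := by
  calc ∑ F ∈ Ω.powersetCard r, (#(F ∩ A)).choose a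
      = ∑ F ∈ Ω.powersetCard r, ∑ U ∈ A.powersetCard a, if U ⊆ F then 1 else 0 := by
        refine sum_congr rfl fun F _ => ?_
        rw [sum_boole, Nat.cast_id, ← card_powersetCard]
        congr 1
        ext U
        simp only [mem_powersetCard, mem_filter, subset_inter_iff]
        tauto
    _ = ∑ U ∈ A.powersetCard a, #{F ∈ Ω.powersetCard r | U ⊆ F} := by
        rw [sum_comm]
        simp only [sum_boole, Nat.cast_id]
    _ = ∑ _U ∈ A.powersetCard a, (#Ω - a).choose (r - a) := by
        refine sum_congr rfl fun U hU => ?_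
        obtain ⟨hUA, rfl⟩ := mem_powersetCard.1 hU
        exact card_filter_powersetCard_superset (hUA.trans hA) har
    _ = (#A).choose a * (#Ω - a).choose (r - a) := by
        rw [sum_const, card_powersetCard, smul_eq_mul]

theorem card_lt_card_symmDiff_iff (s t : Finset α) : #s < #(s ∆ t) ↔ 2 * #(s ∩ t) < #t := by
  have hst := card_sdiff_add_card_inter s t
  have hts := card_sdiff_add_card_inter t s
  rw [Finset.symmDiff_def, card_union_of_disjoint disjoint_sdiff_sdiff, inter_comm t s] at *
  omega

theorem card_le_card_filter_forall_add_sum {β ι : Type*} [Fintype ι] (s : Finset β)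
    (p : ι → β → Prop) [∀ i, DecidablePred (p i)] :
    #s ≤ #{x ∈ s | ∀ i, p i x} + ∑ i, #{x ∈ s | ¬ p i x} := by
  classical
  calc #s ≤ #({x ∈ s | ∀ i, p i x} ∪ univ.biUnion fun i => {x ∈ s | ¬ p i x}) := by
        refine card_le_card fun x hx => ?_
        by_cases h : ∀ i, p i x
        · exact mem_union_left _ (mem_filter.2 ⟨hx, h⟩)
        · push Not at h
          obtain ⟨i, hi⟩ := h
          exact mem_union_right _ (mem_biUnion.2 ⟨i, mem_univ i, mem_filter.2 ⟨hx, hi⟩⟩)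
    _ ≤ _ := (card_union_le _ _).trans (Nat.add_le_add_left card_biUnion_le _)

/-- Markov's inequality for the `a`-th binomial moment of the hypergeometric variable `#(F ∩ A)`. -/
theorem card_filter_le_card_inter_powersetCard_le {e : ℝ} (he : 0 ≤ e) (he' : e ≤ 1 / 2)
    {Ω A : Finset α} {r u a : ℕ} (hA : #A ≤ 2 * u) (hae : (a : ℝ) ≤ 2 * e * u)
    (hr : (r : ℝ) ≤ (1 / 2 - e) * #Ω) :
    (#{F ∈ Ω.powersetCard r | u ≤ #(F ∩ A)} : ℝ) ≤ (1 - e) ^ a * (#Ω).choose r := by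
  have hau : a ≤ u := by exact_mod_cast (by nlinarith [u.cast_nonneg (α := ℝ)] : (a : ℝ) ≤ u)
  rcases lt_or_ge r u with hru | hur
  · rw [filter_false_of_mem fun F hF => ?_]
    · simp only [card_empty, CharP.cast_eq_zero]
      exact mul_nonneg (pow_nonneg (by linarith) _) (Nat.cast_nonneg _)
    · have := card_le_card (inter_subset_left (s₁ := F) (s₂ := A))
      rw [(mem_powersetCard.1 hF).2] at this
      omega
  set B := Ω ∩ A
  have hfilter : {F ∈ Ω.powersetCard r | u ≤ #(F ∩ A)} = {F ∈ Ω.powersetCard r | u ≤ #(F ∩ B)} :=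
    filter_congr fun F hF => by
      rw [← inter_assoc, inter_eq_left.2 (mem_powersetCard.1 hF).1]
  rw [hfilter]
  set bad := {F ∈ Ω.powersetCard r | u ≤ #(F ∩ B)}
  have har : a ≤ r := hau.trans hur
  have hmarkov : #bad * u.choose a ≤ (#B).choose a * (#Ω - a).choose (r - a) := by
    rw [← sum_choose_card_inter_powersetCard inter_subset_left har, ← smul_eq_mul]
    exact (card_nsmul_le_sum bad _ _ fun F hF => Nat.choose_le_choose a (mem_filter.1 hF).2).trans
      (sum_le_sum_of_subset (filter_subset _ _))
  have hident : ((#Ω).choose r * r.choose a : ℝ) = (#Ω).choose a * (#Ω - a).choose (r - a) := by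
    exact_mod_cast Nat.choose_mul har
  have hmoment := Nat.choose_mul_choose_le_pow_mul he
    ((card_le_card (inter_subset_right (s₁ := Ω))).trans hA) hau har hae hr
  have hpos : (0 : ℝ) < u.choose a * (#Ω).choose a := by
    have hrΩ : r ≤ #Ω := by exact_mod_cast (by nlinarith [(#Ω).cast_nonneg (α := ℝ)] : (r : ℝ) ≤ #Ω)
    exact mul_pos (by exact_mod_cast Nat.choose_pos hau)
      (by exact_mod_cast Nat.choose_pos (har.trans hrΩ))
  refine le_of_mul_le_mul_right ?_ hpos
  calc (#bad : ℝ) * (u.choose a * (#Ω).choose a)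
      = (#bad * u.choose a : ℕ) * (#Ω).choose a := by push_cast; ring
    _ ≤ ((#B).choose a * (#Ω - a).choose (r - a) : ℕ) * (#Ω).choose a := by gcongr
    _ = (#B).choose a * r.choose a * (#Ω).choose r := by
        push_cast; linear_combination ((#B).choose a : ℝ) * hident.symm
    _ ≤ (1 - e) ^ a * (u.choose a * (#Ω).choose a) * (#Ω).choose r := by gcongr
    _ = _ := by ring

theorem choose_le_two_mul_card_filter_forall_two_mul_card_inter_lt {ι : Type*} [Fintype ι]
    {e : ℝ} (he : 0 ≤ e) (he' : e ≤ 1 / 2) {K r : ℕ} (hK : Fintype.card ι * (1 - e) ^ K ≤ 1 / 2)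
    (Ω : Finset α) (D : ι → Finset α)
    (hD : ∀ i, ((D i).Nonempty ∧ Disjoint Ω (D i)) ∨ (K : ℝ) ≤ e * #(D i))
    (hr : (r : ℝ) ≤ (1 / 2 - e) * #Ω) :
    ((#Ω).choose r : ℝ) ≤ 2 * #{F ∈ Ω.powersetCard r | ∀ i, 2 * #(F ∩ D i) < #(D i)} := by
  have hbad : ∀ i, (#{F ∈ Ω.powersetCard r | ¬ 2 * #(F ∩ D i) < #(D i)} : ℝ)
      ≤ (1 - e) ^ K * (#Ω).choose r := by
    intro i
    rcases hD i with ⟨hne, hdisj⟩ | hlarge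
    · rw [filter_false_of_mem fun F hF => ?_]
      · simp only [card_empty, CharP.cast_eq_zero]
        exact mul_nonneg (pow_nonneg (by linarith) _) (Nat.cast_nonneg _)
      · rw [not_not, disjoint_iff_inter_eq_empty.1
          (disjoint_of_subset_left (mem_powersetCard.1 hF).1 hdisj), card_empty]
        simpa using hne.card_pos
    · have hu : (#(D i) : ℝ) ≤ 2 * ((#(D i) + 1) / 2 : ℕ) := by
        exact_mod_cast (by omega : #(D i) ≤ 2 * ((#(D i) + 1) / 2))
      calc (#{F ∈ Ω.powersetCard r | ¬ 2 * #(F ∩ D i) < #(D i)} : ℝ)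
          ≤ #{F ∈ Ω.powersetCard r | (#(D i) + 1) / 2 ≤ #(F ∩ D i)} := by
            exact_mod_cast card_le_card (monotone_filter_right _ fun F h => by omega)
        _ ≤ _ := card_filter_le_card_inter_powersetCard_le he he' (by omega)
            (by nlinarith) hr
  have hunion := card_le_card_filter_forall_add_sum (Ω.powersetCard r)
    fun i F => 2 * #(F ∩ D i) < #(D i)
  rw [card_powersetCard] at hunion
  have hsum : ∑ i, (#{F ∈ Ω.powersetCard r | ¬ 2 * #(F ∩ D i) < #(D i)} : ℝ)
      ≤ (#Ω).choose r / 2 := by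
    calc _ ≤ ∑ _i : ι, (1 - e) ^ K * (#Ω).choose r := sum_le_sum fun i _ => hbad i
      _ = Fintype.card ι * (1 - e) ^ K * (#Ω).choose r := by
          rw [sum_const, card_univ, nsmul_eq_mul, mul_assoc]
      _ ≤ 1 / 2 * (#Ω).choose r := by gcongr
      _ = _ := by ring
  have hunion' : ((#Ω).choose r : ℝ) ≤ #{F ∈ Ω.powersetCard r | ∀ i, 2 * #(F ∩ D i) < #(D i)} +
      ∑ i, (#{F ∈ Ω.powersetCard r | ¬ 2 * #(F ∩ D i) < #(D i)} : ℝ) := by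
    exact_mod_cast hunion
  linarith

variable [Fintype α] {ι : Type*} [Fintype ι]

theorem choose_le_two_pow_mul_card_filter_forall_two_mul_card_inter_lt {e : ℝ} (he : 0 ≤ e)
    (he' : e ≤ 1 / 2) {K T r : ℕ} (hK : Fintype.card ι * (1 - e) ^ K ≤ 1 / 2)
    (hKT : (K : ℝ) ≤ e * T) (D : ι → Finset α) (hD : ∀ i, (D i).Nonempty)
    (hr : (r : ℝ) ≤ (1 / 2 - e) * (Fintype.card α - Fintype.card ι * T)) :
    ((Fintype.card α).choose r : ℝ) ≤
      2 ^ (Fintype.card ι * T + 1) * #{F : Finset α | #F = r ∧ ∀ i, 2 * #(F ∩ D i) < #(D i)} := by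
  set S := ({i | #(D i) ≤ T} : Finset ι).biUnion D
  have hS : #S ≤ Fintype.card ι * T :=
    (card_biUnion_le_card_mul _ _ _ fun i hi => (mem_filter.1 hi).2).trans
      (Nat.mul_le_mul_right T ((card_filter_le _ _).trans card_univ.le))
  have hcard := card_compl_add_card S
  have hrΩ : (r : ℝ) ≤ (1 / 2 - e) * #Sᶜ := by
    have hcard' : (Fintype.card α : ℝ) = #Sᶜ + #S := by exact_mod_cast hcard.symm
    have hS' : (#S : ℝ) ≤ Fintype.card ι * T := by exact_mod_cast hS
    nlinarith
  have hD' : ∀ i, ((D i).Nonempty ∧ Disjoint Sᶜ (D i)) ∨ (K : ℝ) ≤ e * #(D i) := by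
    intro i
    by_cases hi : #(D i) ≤ T
    · exact .inl ⟨hD i, disjoint_compl_left_iff.2 (subset_biUnion_of_mem D (by simpa using hi))⟩
    · exact .inr (hKT.trans (by gcongr; exact_mod_cast (not_le.1 hi).le))
  have hmany :
      ((#Sᶜ).choose r : ℝ) ≤ 2 * #{F : Finset α | #F = r ∧ ∀ i, 2 * #(F ∩ D i) < #(D i)} := by
    refine (choose_le_two_mul_card_filter_forall_two_mul_card_inter_lt he he' hK Sᶜ D hD'
      hrΩ).trans ?_
    gcongr
    intro F
    simp only [mem_filter, mem_powersetCard, mem_univ]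
    tauto
  have hhalf : (Fintype.card α).choose r ≤ 2 ^ (Fintype.card ι * T) * (#Sᶜ).choose r := by
    rw [← hcard]
    refine (Nat.choose_add_le_two_pow_mul_choose ?_ _).trans ?_
    · exact_mod_cast (by nlinarith : (2 * r : ℝ) ≤ #Sᶜ)
    · exact Nat.mul_le_mul_right _ (Nat.pow_le_pow_right two_pos hS)
  calc ((Fintype.card α).choose r : ℝ)
      ≤ 2 ^ (Fintype.card ι * T) * (#Sᶜ).choose r := by exact_mod_cast hhalf
    _ ≤ _ := by rw [pow_succ, mul_assoc]; gcongr

end Finset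

theorem exists_const_mul_choose_le_card_filter_forall_two_mul_card_inter_lt (ι : Type*)
    [Fintype ι] {ε : ℝ} (hε : 0 < ε) :
    ∃ c : ℝ, 0 < c ∧ ∃ n₀ : ℕ, ∀ (α : Type*) [Fintype α] [DecidableEq α], n₀ ≤ Fintype.card α →
      ∀ D : ι → Finset α, (∀ i, (D i).Nonempty) →
        ∀ r : ℕ, (r : ℝ) ≤ (1 / 2 - ε) * Fintype.card α →
          c * (Fintype.card α).choose r ≤
            #{F : Finset α | #F = r ∧ ∀ i, 2 * #(F ∩ D i) < #(D i)} := by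
  set ℓ := Fintype.card ι
  set e := min (ε / 2) (1 / 2)
  have he : 0 < e := lt_min (by linarith) (by norm_num)
  have he' : e ≤ 1 / 2 := min_le_right _ _
  have heε : 2 * e ≤ ε := by linarith [min_le_left (ε / 2) (1 / 2)]
  obtain ⟨K, hK⟩ : ∃ K : ℕ, (1 - e) ^ K < 1 / (2 * ℓ + 1) :=
    exists_pow_lt_of_lt_one (by positivity) (by linarith)
  have hℓK : (ℓ : ℝ) * (1 - e) ^ K ≤ 1 / 2 := by
    rw [lt_div_iff₀ (by positivity)] at hK
    nlinarith [pow_nonneg (by linarith : (0 : ℝ) ≤ 1 - e) K]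
  set T := ⌈K / e⌉₊
  have hKT : (K : ℝ) ≤ e * T := (div_le_iff₀' he).1 (Nat.le_ceil _)
  refine ⟨1 / 2 ^ (ℓ * T + 1), by positivity, ⌈ℓ * T / e⌉₊, fun α _ _ hn D hD r hr => ?_⟩
  have hse : (ℓ * T : ℝ) ≤ e * Fintype.card α := (div_le_iff₀' he).1 (Nat.ceil_le.1 hn)
  rw [div_mul_eq_mul_div, one_mul, div_le_iff₀' (by positivity)]
  exact choose_le_two_pow_mul_card_filter_forall_two_mul_card_inter_lt he.le he' hℓK hKT D hD
    (by nlinarith)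

section Flip

variable {ι : Type*} [DecidableEq ι]

def flipAt (x : ι → Bool) (F : Finset ι) : ι → Bool :=
  fun j => if j ∈ F then !x j else x j

theorem flipAt_injective (x : ι → Bool) : Function.Injective (flipAt x) := by
  intro F G h
  ext j
  have := congrFun h j
  unfold flipAt at this
  by_cases hF : j ∈ F <;> by_cases hG : j ∈ G <;> cases x j <;> simp_all

theorem hammingDist_flipAt [Fintype ι] (x y : ι → Bool) (F : Finset ι) :
    hammingDist (flipAt x F) y = #(F ∆ ({j | x j ≠ y j} : Finset ι)) := by
  unfold hammingDist flipAt
  congr 1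
  ext j
  by_cases hj : j ∈ F <;> cases x j <;> cases y j <;> simp [hj, mem_symmDiff]

theorem hammingDist_flipAt_self [Fintype ι] (x : ι → Bool) (F : Finset ι) :
    hammingDist (flipAt x F) x = #F := by
  rw [hammingDist_flipAt, filter_false_of_mem fun j _ h => h rfl, ← bot_eq_empty, symmDiff_bot]

end Flip

theorem many_words_at_exact_distance_general (ℓ : ℕ) (ε : ℝ) (hε : 0 < ε) :
    ∃ (c : ℝ), 0 < c ∧ ∃ n₀ : ℕ, ∀ n : ℕ, n₀ ≤ n →
      ∀ (x : Fin n → Bool) (y : Fin ℓ → (Fin n → Bool)), (∀ i, y i ≠ x) →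
      ∀ r : ℕ, (r : ℝ) ≤ (1 / 2 - ε) * n →
        c * (n.choose r) ≤
          ((Finset.univ.filter (fun z : Fin n → Bool =>
            hammingDist z x = r ∧ ∀ i, r < hammingDist z (y i))).card : ℝ) := by
  obtain ⟨c, hc, n₀, hmany⟩ :=
    exists_const_mul_choose_le_card_filter_forall_two_mul_card_inter_lt (Fin ℓ) hε
  refine ⟨c, hc, n₀, fun n hn x y hy r hr => ?_⟩
  set D : Fin ℓ → Finset (Fin n) := fun i => {j | x j ≠ y i j}
  have hD : ∀ i, (D i).Nonempty := fun i => card_pos.1 (hammingDist_pos.2 (hy i).symm)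
  have hsets := hmany (Fin n) (by simpa using hn) D hD r (by simpa using hr)
  rw [Fintype.card_fin] at hsets
  refine hsets.trans (Nat.cast_le.2 (card_le_card_of_injOn (flipAt x) (fun F hF => ?_)
    (flipAt_injective x).injOn))
  simp only [coe_filter, mem_univ, true_and, Set.mem_ofPred_eq] at hF ⊢
  obtain ⟨rfl, hFD⟩ := hF
  refine ⟨hammingDist_flipAt_self x F, fun i => ?_⟩
  rw [hammingDist_flipAt]
  exact (card_lt_card_symmDiff_iff _ _).2 (hFD i)

/-- For fixed `ℓ ≥ 1` and every `ε > 0` there are `c > 0` and `n₀` such that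
for all `n ≥ n₀`, all words `x, y₁, …, y_ℓ` with `yᵢ ≠ x`, and all `r ≤ (1/2 - ε)n`,
at least `c·binom(n,r)` words `z` satisfy `d(z,x) = r` and `d(z,yᵢ) > r` for all `i`. -/
theorem many_words_at_exact_distance (ℓ : ℕ) (hℓ : 1 ≤ ℓ) (ε : ℝ) (hε : 0 < ε) :
    ∃ (c : ℝ), 0 < c ∧ ∃ n₀ : ℕ, ∀ n : ℕ, n₀ ≤ n →
      ∀ (x : Fin n → Bool) (y : Fin ℓ → (Fin n → Bool)), (∀ i, y i ≠ x) →
      ∀ r : ℕ, (r : ℝ) ≤ (1 / 2 - ε) * n →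
        c * (n.choose r) ≤
          ((Finset.univ.filter (fun z : Fin n → Bool =>
            hammingDist z x = r ∧ ∀ i, r < hammingDist z (y i))).card : ℝ) :=
  many_words_at_exact_distance_general ℓ ε hε
end

section
/- Let r ≥ 1, ℓ ≥ 1 and n ≥ 1, and suppose m_n(r,ℓ) > 0. Then there exists an (r,≤ℓ)-identifying code C in 𝔽ⁿ whose size K satisfies K ≤ ⌈(2ⁿ / m_n(r,ℓ))·ln N_ℓ⌉ + 1, where N_ℓ is the number of unordered pairs {X,Y} of subsets of 𝔽ⁿ with X ≠ Y, 1 ≤ |X| ≤ ℓ and 1 ≤ |Y| ≤ ℓ. -/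
open Finset

/-!
Each of the `N_ℓ` pairs `{X, Y}` must be separated by a code point in `B_r(X) △ B_r(Y)`, a set
of at least `m = m_n(r,ℓ)` points. By averaging, some point of `𝔽ⁿ` separates a fraction
`m / 2ⁿ` of the pairs still unseparated, so `K` greedy choices leave at most
`N_ℓ (1 - m/2ⁿ)^K < N_ℓ e^{-Km/2ⁿ} ≤ 1` of them, i.e. none, once `K ≥ (2ⁿ/m) ln N_ℓ`.
The pairs `{∅, X}` only require every ball to meet the code; as the greedy set separates all
pairs of singletons, at most one ball misses it, and one more point fixes that ball.
-/

open scoped symmDiff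

section HittingSet

variable {α ι : Type*} [Fintype α] [DecidableEq α]

theorem exists_mul_card_le_card_mul_card_filter_mem [Nonempty α] (f : ι → Finset α)
    (P : Finset ι) {m : ℕ} (hf : ∀ p ∈ P, m ≤ #(f p)) :
    ∃ x, m * #P ≤ Fintype.card α * #{p ∈ P | x ∈ f p} := by
  have hsum : m * #P ≤ ∑ x, #{p ∈ P | x ∈ f p} := calc
    m * #P = ∑ _p ∈ P, m := by rw [sum_const, smul_eq_mul, mul_comm]
    _ ≤ ∑ p ∈ P, #(f p) := sum_le_sum hf
    _ = ∑ x, #{p ∈ P | x ∈ f p} := by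
      simp only [card_filter]
      rw [sum_comm]
      simp
  obtain ⟨x, -, hx⟩ := exists_le_of_sum_le univ_nonempty
    (f := fun _ => m * #P) (g := fun x => Fintype.card α * #{p ∈ P | x ∈ f p})
    (by simpa [← mul_sum] using Nat.mul_le_mul_left _ hsum)
  exact ⟨x, hx⟩

/-- The greedy bound `#{p ∈ P | Disjoint (f p) T} ≤ #P (1 - m / |α|) ^ K`, cleared of
denominators. -/
theorem exists_card_le_pow_mul_card_filter_disjoint (f : ι → Finset α) {m : ℕ} (K : ℕ)
    (P : Finset ι) (hf : ∀ p ∈ P, m ≤ #(f p)) :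
    ∃ T : Finset α, #T ≤ K ∧
      Fintype.card α ^ K * #{p ∈ P | Disjoint (f p) T} ≤ #P * (Fintype.card α - m) ^ K := by
  induction K generalizing P with
  | zero => exact ⟨∅, le_rfl, by simp⟩
  | succ K ih =>
    cases isEmpty_or_nonempty α
    · exact ⟨∅, by simp, by simp⟩
    obtain ⟨x, hx⟩ := exists_mul_card_le_card_mul_card_filter_mem f P hf
    set u := Fintype.card α
    set P' := {p ∈ P | x ∉ f p}
    obtain ⟨T, hTK, hT⟩ := ih P' fun p hp => hf p (mem_filter.1 hp).1
    have hP' : u * #P' ≤ #P * (u - m) := by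
      have hsplit : u * #{p ∈ P | x ∈ f p} + u * #P' = u * #P := by
        rw [← mul_add, card_filter_add_card_filter_not]
      rw [mul_comm #P, Nat.sub_mul]
      omega
    have hunc : {p ∈ P | Disjoint (f p) (insert x T)} = {p ∈ P' | Disjoint (f p) T} := by
      simp only [P', filter_filter, disjoint_insert_right]
    refine ⟨insert x T, (card_insert_le _ _).trans (by omega), ?_⟩
    calc u ^ (K + 1) * #{p ∈ P | Disjoint (f p) (insert x T)}
        = u * (u ^ K * #{p ∈ P' | Disjoint (f p) T}) := by rw [hunc]; ring
      _ ≤ u * (#P' * (u - m) ^ K) := Nat.mul_le_mul_left _ hT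
      _ = u * #P' * (u - m) ^ K := by ring
      _ ≤ #P * (u - m) * (u - m) ^ K := Nat.mul_le_mul_right _ hP'
      _ = #P * (u - m) ^ (K + 1) := by ring

theorem mul_one_sub_pow_lt_one {a N : ℝ} {K : ℕ} (ha : 0 < a) (ha₁ : a ≤ 1) (hN : 1 < N)
    (hK : Real.log N ≤ a * K) : N * (1 - a) ^ K < 1 := by
  have hK₀ : K ≠ 0 := by
    rintro rfl
    simpa using (Real.log_pos hN).trans_le hK
  calc N * (1 - a) ^ K < N * Real.exp (-a) ^ K := by
        gcongr
        linarith [Real.add_one_lt_exp (neg_ne_zero.2 ha.ne')]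
    _ = N * Real.exp (-(a * K)) := by rw [← Real.exp_nat_mul]; ring_nf
    _ ≤ N * Real.exp (-Real.log N) := by gcongr
    _ = 1 := by rw [Real.exp_neg, Real.exp_log (by linarith)]; field_simp

theorem exists_hitting_set (f : ι → Finset α) (P : Finset ι) {m : ℕ} (hm : 0 < m)
    (hP : 1 < #P) (hf : ∀ p ∈ P, m ≤ #(f p)) :
    ∃ T : Finset α, #T ≤ ⌈(Fintype.card α / m : ℝ) * Real.log #P⌉₊ ∧
      ∀ p ∈ P, ¬Disjoint (f p) T := by
  set u := Fintype.card α
  set K := ⌈(u / m : ℝ) * Real.log #P⌉₊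
  obtain ⟨p₀, hp₀⟩ := card_pos.1 (by omega : 0 < #P)
  have hmu : m ≤ u := (hf p₀ hp₀).trans (card_le_univ _)
  have hu : (0 : ℝ) < u := by exact_mod_cast hm.trans_le hmu
  obtain ⟨T, hTK, hT⟩ := exists_card_le_pow_mul_card_filter_disjoint f K P hf
  refine ⟨T, hTK, fun p hp hdisj => ?_⟩
  have hlog : Real.log #P ≤ m / u * K := calc
    Real.log #P = m / u * ((u / m : ℝ) * Real.log #P) := by field_simp
    _ ≤ m / u * K := by gcongr; exact Nat.le_ceil _
  have hlt := mul_one_sub_pow_lt_one (div_pos (by exact_mod_cast hm) hu)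
    ((div_le_one hu).2 (by exact_mod_cast hmu)) (by exact_mod_cast hP) hlog
  rw [one_sub_div hu.ne', div_pow, mul_div_assoc', div_lt_one (by positivity)] at hlt
  have hcast : ((u ^ K * #{p ∈ P | Disjoint (f p) T} : ℕ) : ℝ) ≤ (#P * (u - m) ^ K : ℕ) := by
    exact_mod_cast hT
  push_cast [Nat.cast_sub hmu] at hcast
  have hnone : (#{p ∈ P | Disjoint (f p) T} : ℝ) < 1 :=
    lt_of_mul_lt_mul_left (by linarith : (u : ℝ) ^ K * _ < u ^ K * 1) (by positivity)
  exact hnone.not_ge (by exact_mod_cast card_pos.2 ⟨p, mem_filter.2 ⟨hp, hdisj⟩⟩)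

theorem exists_separating_set {κ : Type*} [DecidableEq κ]
    (g : κ → Finset α) (F : Finset κ) {m : ℕ} (hm : 0 < m) (hF : 1 < #(F.powersetCard 2))
    (hg : ∀ X ∈ F, ∀ Y ∈ F, X ≠ Y → m ≤ #(g X ∆ g Y)) :
    ∃ T : Finset α, #T ≤ ⌈(Fintype.card α / m : ℝ) * Real.log #(F.powersetCard 2)⌉₊ ∧
      ∀ X ∈ F, ∀ Y ∈ F, X ≠ Y → ¬Disjoint (g X ∆ g Y) T := by
  have hpair (X Y : κ) : ({X, Y} : Finset κ).sup g \ ({X, Y} : Finset κ).inf g = g X ∆ g Y := by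
    simp [symmDiff_eq_sup_sdiff_inf]
  obtain ⟨T, hTcard, hT⟩ := exists_hitting_set (fun p => p.sup g \ p.inf g) _ hm hF <| by
    intro p hp
    obtain ⟨hpF, hp2⟩ := mem_powersetCard.1 hp
    obtain ⟨X, Y, hXY, rfl⟩ := card_eq_two.1 hp2
    rw [hpair]
    exact hg X (hpF (by simp)) Y (hpF (by simp)) hXY
  refine ⟨T, hTcard, fun X hX Y hY hXY => ?_⟩
  rw [← hpair]
  exact hT _ (mem_powersetCard.2 ⟨by simp [insert_subset_iff, hX, hY], card_pair hXY⟩)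

end HittingSet

theorem exists_card_le_succ_forall_not_disjoint {α β : Type*} [DecidableEq β]
    (B : α → Finset β) (hB : ∀ a, (B a).Nonempty) (T : Finset β)
    (hT : ∀ a b, a ≠ b → ¬Disjoint (B a ∆ B b) T) :
    ∃ C : Finset β, T ⊆ C ∧ #C ≤ #T + 1 ∧ ∀ a, ¬Disjoint (B a) C := by
  by_cases h : ∃ a₀, Disjoint (B a₀) T
  · obtain ⟨a₀, ha₀⟩ := h
    obtain ⟨c, hc⟩ := hB a₀
    refine ⟨insert c T, subset_insert _ _, card_insert_le _ _, fun a => ?_⟩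
    rcases eq_or_ne a a₀ with rfl | hne
    · exact not_disjoint_iff.2 ⟨c, hc, mem_insert_self _ _⟩
    · obtain ⟨y, hy, hyT⟩ := not_disjoint_iff.1 (hT a a₀ hne)
      have hya : y ∈ B a := by
        rcases mem_symmDiff.1 hy with ⟨hya, -⟩ | ⟨hya₀, -⟩
        · exact hya
        · exact absurd hyT (disjoint_left.1 ha₀ hya₀)
      exact not_disjoint_iff.2 ⟨y, hya, mem_insert_of_mem hyT⟩
  · exact ⟨T, subset_rfl, Nat.le_succ _, not_exists.1 h⟩

section Hamming

variable {n r ℓ : ℕ}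

theorem mem_ballH_self (x : Fin n → Bool) : x ∈ ballH n r x := by
  simp [ballH]

theorem ballH_eq_univ (h : n ≤ r) (x : Fin n → Bool) : ballH n r x = univ := by
  ext y
  simpa [ballH] using (hammingDist_le_card_fintype (x := x) (y := y)).trans (by simpa using h)

theorem mlow_eq_zero_of_le (h : n ≤ r) : mlow n r ℓ = 0 := by
  have hball (X : Finset (Fin n → Bool)) (hX : 1 ≤ #X) : X.biUnion (ballH n r) = univ := by
    obtain ⟨x, hx⟩ := card_pos.1 hX
    exact eq_univ_of_forall fun y => mem_biUnion.2 ⟨x, hx, by simp [ballH_eq_univ h]⟩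
  refine Nat.sInf_eq_zero.2 (or_iff_not_imp_right.2 fun hne => ?_)
  obtain ⟨-, X, Y, hXY, hX, hXℓ, hY, hYℓ, -⟩ := Set.nonempty_iff_ne_empty.2 hne
  refine ⟨X, Y, hXY, hX, hXℓ, hY, hYℓ, ?_⟩
  rw [hball X hX, hball Y hY, symmDiff_self, bot_eq_empty, card_empty]

theorem mlow_le_card_symmDiff {X Y : Finset (Fin n → Bool)} (hXY : X ≠ Y) (hX₁ : 1 ≤ #X)
    (hXℓ : #X ≤ ℓ) (hY₁ : 1 ≤ #Y) (hYℓ : #Y ≤ ℓ) :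
    mlow n r ℓ ≤ #(X.biUnion (ballH n r) ∆ Y.biUnion (ballH n r)) :=
  Nat.sInf_le ⟨X, Y, hXY, hX₁, hXℓ, hY₁, hYℓ, rfl⟩

theorem two_le_of_mlow_pos (hr : 1 ≤ r) (hm : 0 < mlow n r ℓ) : 2 ≤ n := by
  by_contra! h
  exact hm.ne' (mlow_eq_zero_of_le (by omega))

theorem one_lt_npairs (hℓ : 1 ≤ ℓ) (hn : 2 ≤ n) : 1 < Npairs n ℓ := by
  have hsingletons : 2 ^ n ≤ #{X : Finset (Fin n → Bool) | 1 ≤ #X ∧ #X ≤ ℓ} := by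
    calc 2 ^ n = #(univ.map ⟨singleton, singleton_injective⟩ : Finset (Finset (Fin n → Bool))) := by
          simp
      _ ≤ _ := card_le_card fun X hX => by
          obtain ⟨x, -, rfl⟩ := mem_map.1 hX
          simpa using hℓ
  have h4 : 4 ≤ #{X : Finset (Fin n → Bool) | 1 ≤ #X ∧ #X ≤ ℓ} :=
    le_trans (by simpa using Nat.pow_le_pow_right two_pos hn) hsingletons
  rw [Npairs, card_powersetCard]
  exact lt_of_lt_of_le (by decide) (Nat.choose_le_choose 2 h4)

theorem idCode_of_forall_not_disjoint {C : Finset (Fin n → Bool)}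
    (hball : ∀ z, ¬Disjoint (ballH n r z) C)
    (hpair : ∀ X Y : Finset (Fin n → Bool), 1 ≤ #X → #X ≤ ℓ → 1 ≤ #Y → #Y ≤ ℓ → X ≠ Y →
      ¬Disjoint (X.biUnion (ballH n r) ∆ Y.biUnion (ballH n r)) C) :
    IdCode n r ℓ C := by
  have hcover (Z : Finset (Fin n → Bool)) (hZ : Z.Nonempty) :
      ¬Disjoint (Z.biUnion (ballH n r)) C := by
    obtain ⟨z, hz⟩ := hZ
    exact fun h => hball z (h.mono_left (subset_biUnion_of_mem _ hz))
  refine ⟨?_, fun X Y hX hY hXY heq => ?_⟩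
  · obtain ⟨c, -, hc⟩ := not_disjoint_iff.1 (hball fun _ => false)
    exact ⟨c, hc⟩
  have hdisj : Disjoint (X.biUnion (ballH n r) ∆ Y.biUnion (ballH n r)) C := by
    rw [disjoint_iff, inf_symmDiff_distrib_right]
    exact symmDiff_eq_bot.2 heq
  rcases X.eq_empty_or_nonempty with rfl | hX₀ <;> rcases Y.eq_empty_or_nonempty with rfl | hY₀
  · exact hXY rfl
  · exact hcover Y hY₀ (by rwa [biUnion_empty, ← bot_eq_empty, bot_symmDiff] at hdisj)
  · exact hcover X hX₀ (by rwa [biUnion_empty, ← bot_eq_empty, symmDiff_bot] at hdisj)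
  · exact hpair X Y (card_pos.2 hX₀) hX (card_pos.2 hY₀) hY hXY hdisj

end Hamming

theorem exists_identifying_code_of_mlow_pos_general (n r ℓ : ℕ) (hr : 1 ≤ r) (hℓ : 1 ≤ ℓ)
    (hm : 0 < mlow n r ℓ) :
    ∃ C : Finset (Fin n → Bool), IdCode n r ℓ C ∧
      (C.card : ℝ) ≤ ⌈((2 : ℝ) ^ n / (mlow n r ℓ : ℝ)) * Real.log (Npairs n ℓ)⌉ + 1 := by
  set F : Finset (Finset (Fin n → Bool)) := {X | 1 ≤ #X ∧ #X ≤ ℓ}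
  have hF (X : Finset (Fin n → Bool)) : X ∈ F ↔ 1 ≤ #X ∧ #X ≤ ℓ := by simp [F]
  obtain ⟨T, hTcard, hT⟩ := exists_separating_set (fun X => X.biUnion (ballH n r)) F hm
    (one_lt_npairs hℓ (two_le_of_mlow_pos hr hm)) fun X hX Y hY hXY =>
      mlow_le_card_symmDiff hXY ((hF X).1 hX).1 ((hF X).1 hX).2 ((hF Y).1 hY).1 ((hF Y).1 hY).2
  obtain ⟨C, hTC, hCcard, hC⟩ := exists_card_le_succ_forall_not_disjoint (ballH n r)
    (fun z => ⟨z, mem_ballH_self z⟩) T fun z z' hzz' => by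
      simpa using hT {z} (by simpa [hF]) {z'} (by simpa [hF]) (by simpa using hzz')
  refine ⟨C, idCode_of_forall_not_disjoint hC fun X Y hX₁ hXℓ hY₁ hYℓ hXY hdisj =>
    hT X ((hF X).2 ⟨hX₁, hXℓ⟩) Y ((hF Y).2 ⟨hY₁, hYℓ⟩) hXY (hdisj.mono_right hTC), ?_⟩
  have hx : (Fintype.card (Fin n → Bool) / mlow n r ℓ : ℝ) * Real.log #(F.powersetCard 2) =
      (2 ^ n / mlow n r ℓ) * Real.log (Npairs n ℓ) := by
    simp [Npairs, F]
  rw [hx] at hTcard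
  rw [← natCast_ceil_eq_intCast_ceil (by positivity)]
  exact_mod_cast hCcard.trans (Nat.add_le_add_right hTcard 1)

/-- If `m_n(r,ℓ) > 0`, there exists an `(r,≤ℓ)`-identifying code of size
`K ≤ ⌈(2ⁿ / m_n(r,ℓ))·ln N_ℓ⌉ + 1`. -/
theorem exists_identifying_code_of_mlow_pos (n r ℓ : ℕ) (hr : 1 ≤ r) (hℓ : 1 ≤ ℓ)
    (hn : 1 ≤ n) (hm : 0 < mlow n r ℓ) :
    ∃ C : Finset (Fin n → Bool), IdCode n r ℓ C ∧
      (C.card : ℝ) ≤ ⌈((2 : ℝ) ^ n / (mlow n r ℓ : ℝ)) * Real.log (Npairs n ℓ)⌉ + 1 :=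
  exists_identifying_code_of_mlow_pos_general n r ℓ hr hℓ hm
end

section
/- Let n ≥ 1, 0 ≤ r ≤ n − 1, ℓ ≥ 1 and let C ⊆ 𝔽ⁿ be an (r,≤ℓ)-identifying code. Then |𝔽ⁿ \ B_{n−r−1}(C)| ≤ 1, i.e., at most one word of 𝔽ⁿ is at Hamming distance greater than n − r − 1 from every codeword of C. -/
/-!
If `x` is at distance more than `n - r - 1` from every codeword, then its complement `xᶜ` is
within distance `r` of every codeword, i.e. `I_r(C; {xᶜ}) = C`. Two such words `x ≠ y` would give
two distinct singletons `{xᶜ} ≠ {yᶜ}` with the same identifying set, which an `(r, ≤ ℓ)`-identifying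
code with `ℓ ≥ 1` forbids.
-/

open Finset

theorem hammingDist_compl_add_hammingDist {ι : Type*} [Fintype ι] (x y : ι → Bool) :
    hammingDist xᶜ y + hammingDist x y = Fintype.card ι := by
  have hcompl : ∀ i, xᶜ i ≠ y i ↔ ¬ x i ≠ y i := fun i => by
    rw [Pi.compl_apply]; cases x i <;> cases y i <;> decide
  rw [hammingDist, hammingDist, filter_congr fun i _ => hcompl i, add_comm,
    card_filter_add_card_filter_not, card_univ]

theorem subset_ballH_compl_of_lt_hammingDist {n r : ℕ} {C : Finset (Fin n → Bool)}
    {x : Fin n → Bool} (hx : ∀ c ∈ C, n - r - 1 < hammingDist x c) : C ⊆ ballH n r xᶜ := by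
  intro c hc
  have hsum := hammingDist_compl_add_hammingDist x c
  rw [Fintype.card_fin] at hsum
  have hfar := hx c hc
  simp only [ballH, mem_filter, mem_univ, true_and]
  omega

theorem IdCode.eq_of_subset_ballH {n r ℓ : ℕ} {C : Finset (Fin n → Bool)} (hC : IdCode n r ℓ C)
    (hℓ : 1 ≤ ℓ) {x y : Fin n → Bool} (hx : C ⊆ ballH n r x) (hy : C ⊆ ballH n r y) :
    x = y := by
  by_contra hxy
  refine hC.2 {x} {y} (by simpa using hℓ) (by simpa using hℓ) (by simpa using hxy) ?_
  rw [singleton_biUnion, singleton_biUnion, inter_eq_right.mpr hx, inter_eq_right.mpr hy]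

theorem identifying_code_almost_covers_general (n r ℓ : ℕ)
    (hℓ : 1 ≤ ℓ) (C : Finset (Fin n → Bool)) (hC : IdCode n r ℓ C) :
    (Finset.univ.filter (fun x : Fin n → Bool =>
      ∀ c ∈ C, n - r - 1 < hammingDist x c)).card ≤ 1 := by
  refine card_le_one.mpr fun x hx y hy => compl_injective ?_
  exact hC.eq_of_subset_ballH hℓ (subset_ballH_compl_of_lt_hammingDist (mem_filter.mp hx).2)
    (subset_ballH_compl_of_lt_hammingDist (mem_filter.mp hy).2)

/-- For an `(r,≤ℓ)`-identifying code `C` with `0 ≤ r ≤ n-1`, at most one word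
of `𝔽ⁿ` is at distance greater than `n - r - 1` from every codeword of `C`. -/
theorem identifying_code_almost_covers (n r ℓ : ℕ) (hn : 1 ≤ n) (hr : r + 1 ≤ n)
    (hℓ : 1 ≤ ℓ) (C : Finset (Fin n → Bool)) (hC : IdCode n r ℓ C) :
    (Finset.univ.filter (fun x : Fin n → Bool =>
      ∀ c ∈ C, n - r - 1 < hammingDist x c)).card ≤ 1 :=
  identifying_code_almost_covers_general n r ℓ hℓ C hC
end

section
/- Let ℓ ≥ 1 be a fixed integer and let ρ ∈ [0,1). For each n let r = ⌊ρn⌋. Then liminf_{n→∞} (1/n)·log₂ M_r^{(≤ℓ)}(n) ≥ 1 − h(ρ), where the liminf is taken over those n for which an (r,≤ℓ)-identifying code in 𝔽ⁿ exists. -/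
/-!
Taking singletons `X = {x}`, `Y = {y}` shows that an `(r, ≤ ℓ)`-identifying code `C` separates
any two distinct words: some `c ∈ C` has exactly one of them within distance `r`. A ball of
volume `V` separates at most `2 V (2ⁿ - V)` ordered pairs, and the complement of a ball of
radius `r` is the ball of radius `n - r - 1` around the antipodal word. Writing
`V k = ∑_{i ≤ k} C(n, i)`, this gives `2ⁿ (2ⁿ - 1) ≤ 2 |C| V(r) V(n - r - 1)`.
For `r = ⌊ρn⌋` one of the two radii is at most `min(ρ, 1 - ρ) n`, so its ball has volume at most
`2^{n h(ρ)}` by the estimate `∑_{i ≤ pn} C(n, i) ≤ 2^{n h(p)}` for `p ≤ 1/2`, and the other ball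
has volume at most `2ⁿ`. Hence `log₂ |C| ≥ n (1 - h(ρ)) - 2`.
-/

open Finset

theorem card_filter_hammingDist_le {ι : Type*} [Fintype ι] [DecidableEq ι] (x : ι → Bool)
    (r : ℕ) : #{y | hammingDist x y ≤ r} = ∑ i ∈ range (r + 1), (Fintype.card ι).choose i := by
  have hflip : #{y | hammingDist x y ≤ r} = #{s : Finset ι | #s ≤ r} := by
    refine card_nbij' (fun y => ({i | x i ≠ y i} : Finset ι))
      (fun s i => if i ∈ s then !x i else x i)
      (fun y hy => by simpa [hammingDist] using hy) (fun s hs => ?_) (fun y _ => ?_) (fun s _ => ?_)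
    · have : ({i | x i ≠ if i ∈ s then !x i else x i} : Finset ι) = s := by
        ext i; by_cases i ∈ s <;> simp [*]
      simpa [hammingDist, this] using hs
    · funext i; cases hx : x i <;> cases hy : y i <;> simp [hx, hy]
    · ext i; by_cases i ∈ s <;> simp [*]
  rw [hflip, card_eq_sum_card_fiberwise (f := card) (t := range (r + 1))
    (fun s hs => by simpa [Nat.lt_succ_iff] using hs)]
  refine sum_congr rfl fun i hi => ?_
  rw [← card_univ, ← card_powersetCard, powersetCard_eq_filter, powerset_univ, filter_filter]
  congr 1; ext s; simp only [mem_filter, mem_univ, true_and, mem_range] at hi ⊢; omega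

theorem hammingDist_not_left {ι : Type*} [Fintype ι] (x y : ι → Bool) :
    hammingDist (fun i => !x i) y = Fintype.card ι - hammingDist x y := by
  have hsplit := card_filter_add_card_filter_not (s := univ) (fun i => x i ≠ y i)
  have heq : univ.filter (fun i => (!x i) ≠ y i) = univ.filter (fun i => ¬x i ≠ y i) := by
    ext i; cases x i <;> cases y i <;> simp
  simp only [hammingDist, card_univ] at hsplit ⊢
  rw [heq]
  omega

theorem mem_ballH {n r : ℕ} {x y : Fin n → Bool} : y ∈ ballH n r x ↔ hammingDist x y ≤ r := by
  simp [ballH]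

theorem card_ballH (n r : ℕ) (x : Fin n → Bool) :
    #(ballH n r x) = ∑ i ∈ range (r + 1), n.choose i := by
  simpa [ballH] using card_filter_hammingDist_le x r

theorem compl_ballH {n r : ℕ} (hr : r < n) (x : Fin n → Bool) :
    (ballH n r x)ᶜ = ballH n (n - r - 1) fun i => !x i := by
  ext y
  have := hammingDist_le_card_fintype (x := x) (y := y)
  simp only [mem_compl, mem_ballH, hammingDist_not_left, Fintype.card_fin] at this ⊢
  omega

theorem card_mul_card_sub_one_le_of_separating {α ι : Type*} [Fintype α] [DecidableEq α]
    (C : Finset ι) (B : ι → Finset α)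
    (hsep : Pairwise fun x y => ∃ c ∈ C, ¬(x ∈ B c ↔ y ∈ B c)) :
    Fintype.card α * (Fintype.card α - 1) ≤ ∑ c ∈ C, 2 * #(B c) * #(B c)ᶜ := by
  have hcover : (univ : Finset α).offDiag ⊆ C.biUnion fun c => B c ×ˢ (B c)ᶜ ∪ (B c)ᶜ ×ˢ B c := by
    rintro ⟨x, y⟩ hxy
    obtain ⟨c, hc, hxy⟩ := hsep (mem_offDiag.1 hxy).2.2
    refine mem_biUnion.2 ⟨c, hc, ?_⟩
    by_cases hx : x ∈ B c <;> simp_all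
  calc Fintype.card α * (Fintype.card α - 1) = #(univ : Finset α).offDiag := by
        rw [offDiag_card, card_univ, Nat.mul_sub_one]
    _ ≤ #(C.biUnion fun c => B c ×ˢ (B c)ᶜ ∪ (B c)ᶜ ×ˢ B c) := card_le_card hcover
    _ ≤ ∑ c ∈ C, #(B c ×ˢ (B c)ᶜ ∪ (B c)ᶜ ×ˢ B c) := card_biUnion_le
    _ ≤ ∑ c ∈ C, 2 * #(B c) * #(B c)ᶜ := sum_le_sum fun c _ =>
        (card_union_le _ _).trans_eq (by rw [card_product, card_product]; ring)

theorem IdCode.pairwise_separates {n r ℓ : ℕ} {C : Finset (Fin n → Bool)} (hC : IdCode n r ℓ C)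
    (hℓ : 1 ≤ ℓ) : Pairwise fun x y => ∃ c ∈ C, ¬(x ∈ ballH n r c ↔ y ∈ ballH n r c) := by
  intro x y hxy
  by_contra! hsame
  refine hC.2 {x} {y} (by simpa using hℓ) (by simpa using hℓ) (by simpa using hxy) ?_
  ext c
  by_cases hc : c ∈ C
  · simpa [hc, mem_ballH, hammingDist_comm] using hsame c hc
  · simp [hc]

theorem IdCode.two_pow_mul_le {n r ℓ : ℕ} {C : Finset (Fin n → Bool)} (hC : IdCode n r ℓ C)
    (hℓ : 1 ≤ ℓ) (hr : r < n) :
    2 ^ n * (2 ^ n - 1) ≤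
      #C * (2 * (∑ i ∈ range (r + 1), n.choose i) * ∑ i ∈ range (n - r), n.choose i) := by
  have := card_mul_card_sub_one_le_of_separating C (ballH n r) (hC.pairwise_separates hℓ)
  simpa [compl_ballH hr, card_ballH, Nat.sub_add_cancel (Nat.sub_pos_of_lt hr)] using this

theorem exists_idCode_card_eq_Mid {n r ℓ : ℕ} (h : ∃ C, IdCode n r ℓ C) :
    ∃ C, IdCode n r ℓ C ∧ #C = Mid n r ℓ := by
  obtain ⟨C, hC⟩ := h
  exact Nat.sInf_mem (s := {k | ∃ C, IdCode n r ℓ C ∧ #C = k}) ⟨#C, C, hC, rfl⟩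

theorem one_le_sum_range_choose (n : ℕ) {k : ℕ} (hk : 0 < k) :
    1 ≤ ∑ i ∈ range k, n.choose i :=
  (Nat.choose_zero_right n).ge.trans
    (single_le_sum (f := fun i => n.choose i) (fun _ _ => Nat.zero_le _) (mem_range.2 hk))

theorem sum_range_choose_mul_pow_le {n k : ℕ} (hk : k ≤ n) {x : ℝ} (hx0 : 0 ≤ x) (hx1 : x ≤ 1) :
    (∑ i ∈ range (k + 1), (n.choose i : ℝ)) * x ^ k ≤ (1 + x) ^ n :=
  calc (∑ i ∈ range (k + 1), (n.choose i : ℝ)) * x ^ k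
      ≤ ∑ i ∈ range (k + 1), (n.choose i : ℝ) * x ^ i := by
        rw [sum_mul]
        exact sum_le_sum fun i hi => mul_le_mul_of_nonneg_left
          (pow_le_pow_of_le_one hx0 hx1 (Nat.lt_succ_iff.1 (mem_range.1 hi))) (by positivity)
    _ ≤ ∑ i ∈ range (n + 1), (n.choose i : ℝ) * x ^ i :=
        sum_le_sum_of_subset_of_nonneg (range_subset_range.2 (by omega))
          fun _ _ _ => by positivity
    _ = (1 + x) ^ n := by
        rw [add_comm 1 x, add_pow]
        exact sum_congr rfl fun i _ => by rw [one_pow]; ring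

theorem binH_one_sub (p : ℝ) : binH (1 - p) = binH p := by
  unfold binH
  rw [sub_sub_cancel]
  ring

theorem logb_sum_range_choose_le_mul_binH {n k : ℕ} {p : ℝ} (hp0 : 0 ≤ p) (hp : p ≤ 1 / 2)
    (hk : (k : ℝ) ≤ p * n) :
    Real.logb 2 (∑ i ∈ range (k + 1), n.choose i : ℕ) ≤ n * binH p := by
  rcases hp0.eq_or_lt with rfl | hp0
  · obtain rfl : k = 0 := by
      exact_mod_cast (show (k : ℝ) ≤ 0 by simpa using hk).antisymm k.cast_nonneg
    simp [binH]
  have h1p : 0 < 1 - p := by linarith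
  -- the minimiser of `(1 + x) ^ n / x ^ (p * n)`, where that bound equals `2 ^ (n * binH p)`
  set x := p / (1 - p) with hx
  have hx0 : 0 < x := by positivity
  have hx1 : x ≤ 1 := (div_le_one h1p).2 (by linarith)
  have hkn : k ≤ n := by
    have : (k : ℝ) ≤ n := hk.trans (by nlinarith [n.cast_nonneg (α := ℝ)])
    exact_mod_cast this
  have hS : (0 : ℝ) < ∑ i ∈ range (k + 1), (n.choose i : ℝ) := by
    exact_mod_cast one_le_sum_range_choose n k.succ_pos
  have hlogx : Real.logb 2 x ≤ 0 := Real.logb_nonpos one_lt_two hx0.le hx1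
  push_cast
  calc Real.logb 2 (∑ i ∈ range (k + 1), (n.choose i : ℝ))
      ≤ Real.logb 2 ((1 + x) ^ n / x ^ k) := Real.logb_le_logb_of_le one_lt_two hS
        ((le_div_iff₀ (by positivity)).2 (sum_range_choose_mul_pow_le hkn hx0.le hx1))
    _ = n * Real.logb 2 (1 + x) - k * Real.logb 2 x := by
        rw [Real.logb_div (by positivity) (by positivity), Real.logb_pow, Real.logb_pow]
    _ ≤ n * Real.logb 2 (1 + x) - (p * n) * Real.logb 2 x := by nlinarith
    _ = n * binH p := by
        rw [show 1 + x = (1 - p)⁻¹ by rw [hx]; field_simp; ring, Real.logb_inv, hx,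
          Real.logb_div hp0.ne' h1p.ne']
        unfold binH
        ring

theorem logb_sum_range_choose_le (n k : ℕ) :
    Real.logb 2 (∑ i ∈ range (k + 1), n.choose i : ℕ) ≤ n := by
  have hS : (1 : ℝ) ≤ ∑ i ∈ range (k + 1), n.choose i := by
    exact_mod_cast one_le_sum_range_choose n k.succ_pos
  have hle : ∑ i ∈ range (k + 1), n.choose i ≤ 2 ^ n := by
    simpa [card_ballH] using card_le_univ (ballH n k fun _ => false)
  calc Real.logb 2 (∑ i ∈ range (k + 1), n.choose i : ℕ) ≤ Real.logb 2 ((2 : ℝ) ^ n) :=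
        Real.logb_le_logb_of_le one_lt_two (by linarith) (by exact_mod_cast hle)
    _ = n := by rw [Real.logb_pow, Real.logb_self_eq_one one_lt_two, mul_one]

theorem logb_sum_choose_floor_add_logb_sum_choose_le {n : ℕ} (hn : 0 < n) {ρ : ℝ} (hρ0 : 0 ≤ ρ)
    (hρ1 : ρ < 1) :
    Real.logb 2 (∑ i ∈ range (⌊ρ * n⌋₊ + 1), n.choose i : ℕ) +
      Real.logb 2 (∑ i ∈ range (n - ⌊ρ * n⌋₊), n.choose i : ℕ) ≤ n * (1 + binH ρ) := by
  set r := ⌊ρ * n⌋₊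
  have hr_le : (r : ℝ) ≤ ρ * n := Nat.floor_le (by positivity)
  have hr_lt : ρ * n < r + 1 := Nat.lt_floor_add_one _
  have hrn : r < n := (Nat.floor_lt (by positivity)).2
    (mul_lt_of_lt_one_left (by exact_mod_cast hn) hρ1)
  rw [show n - r = n - r - 1 + 1 by omega]
  rcases le_or_gt ρ (1 / 2) with hρ | hρ
  · linarith [logb_sum_range_choose_le_mul_binH hρ0 hρ hr_le,
      logb_sum_range_choose_le n (n - r - 1)]
  · have hk : ((n - r - 1 : ℕ) : ℝ) ≤ (1 - ρ) * n := by
      rw [Nat.cast_sub (by omega), Nat.cast_sub hrn.le, Nat.cast_one]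
      linarith
    have := logb_sum_range_choose_le_mul_binH (by linarith) (by linarith) hk
    rw [binH_one_sub] at this
    linarith [logb_sum_range_choose_le n r]

theorem two_mul_sub_two_le_logb_Mid_add {n r ℓ : ℕ} (hℓ : 1 ≤ ℓ) (hr : r < n)
    (hex : ∃ C, IdCode n r ℓ C) :
    2 * n - 2 ≤ Real.logb 2 (Mid n r ℓ) + Real.logb 2 (∑ i ∈ range (r + 1), n.choose i : ℕ) +
      Real.logb 2 (∑ i ∈ range (n - r), n.choose i : ℕ) := by
  obtain ⟨C, hC, hcard⟩ := exists_idCode_card_eq_Mid hex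
  have hcount := hC.two_pow_mul_le hℓ hr
  rw [hcard] at hcount
  set M := Mid n r ℓ
  set V := ∑ i ∈ range (r + 1), n.choose i
  set W := ∑ i ∈ range (n - r), n.choose i
  have hV : 0 < V := one_le_sum_range_choose n r.succ_pos
  have hW : 0 < W := one_le_sum_range_choose n (Nat.sub_pos_of_lt hr)
  have hN : 2 ≤ 2 ^ n := Nat.le_self_pow (by omega) 2
  have hM : 0 < M :=
    Nat.pos_of_mul_pos_right ((Nat.mul_pos (by positivity) (by omega)).trans_le hcount)
  have hsq : ((2 : ℝ) ^ n) ^ 2 ≤ 2 ^ 2 * M * V * W := by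
    have : ((2 ^ n * (2 ^ n - 1) : ℕ) : ℝ) ≤ (M * (2 * V * W) : ℕ) := by exact_mod_cast hcount
    push_cast [Nat.cast_sub (by omega : 1 ≤ 2 ^ n)] at this
    have : (2 : ℝ) ≤ 2 ^ n := by exact_mod_cast hN
    nlinarith
  have := Real.logb_le_logb_of_le one_lt_two (by positivity) hsq
  rw [Real.logb_mul (by positivity) (by positivity), Real.logb_mul (by positivity) (by positivity),
    Real.logb_mul (by positivity) (by positivity), Real.logb_pow, Real.logb_pow, Real.logb_pow,
    Real.logb_self_eq_one one_lt_two] at this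
  push_cast at this ⊢
  linarith

/-- For fixed `ℓ ≥ 1`, `ρ ∈ [0,1)` and `r = ⌊ρn⌋`,
`liminf (1/n)·log₂ M_r^{(≤ℓ)}(n) ≥ 1 - h(ρ)`, the liminf being over those `n` for which
an `(r,≤ℓ)`-identifying code exists. -/
theorem Mid_log_liminf_lower_bound (ℓ : ℕ) (hℓ : 1 ≤ ℓ) (ρ : ℝ) (hρ0 : 0 ≤ ρ)
    (hρ1 : ρ < 1) :
    ∀ ε : ℝ, 0 < ε → ∃ n₀ : ℕ, ∀ n : ℕ, n₀ ≤ n →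
      (∃ C : Finset (Fin n → Bool), IdCode n ⌊ρ * n⌋₊ ℓ C) →
      1 - binH ρ - ε ≤ Real.logb 2 (Mid n ⌊ρ * n⌋₊ ℓ) / n := by
  intro ε hε
  obtain ⟨n₀, hn₀⟩ := exists_nat_gt (2 / ε)
  refine ⟨n₀, fun n hn hex => ?_⟩
  have hεn : 2 < ε * n := by
    rw [← div_lt_iff₀' hε]
    exact hn₀.trans_le (by exact_mod_cast hn)
  have hn_pos : (0 : ℝ) < n := by nlinarith
  have hr : ⌊ρ * n⌋₊ < n := (Nat.floor_lt (by positivity)).2 (mul_lt_of_lt_one_left hn_pos hρ1)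
  have hMid := two_mul_sub_two_le_logb_Mid_add hℓ hr hex
  have hballs := logb_sum_choose_floor_add_logb_sum_choose_le (by exact_mod_cast hn_pos) hρ0 hρ1
  rw [le_div_iff₀ hn_pos]
  linarith
end
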